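/- arXiv:1201.1999 — 5 statements merged into one kernel-verified Lean document; each statement's English description precedes it below -/
import Mathlib

section
/- Let f : ℝ × ℝ^N → ℝ^N satisfy the Carathéodory conditions (continuity in x for each fixed t; measurability in t for each fixed x together with a locally Lebesgue-integrable bound ‖f(t,x)‖ ≤ m_x(t)) and be locally Lipschitz in x. Suppose f is quasipositive, i.e. for each i, f_i(t, x_1,…,x_{i−1}, 0, x_{i+1},…,x_N) ≥ 0 whenever x_j ≥ 0 for all j ≠ i. If x : [0,∞) → ℝ^N is a continuous function satisfying the integral equation x(t) = x(0) + ∫₀ᵗ f(s, x(s)) ds for all t ≥ 0 (equivalently, an absolutely continuous solution of x' = f(t,x) a.e.) and x(0) has all components ≥ 0, then x(t) has all components ≥ 0 for every t ≥ 0. -/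
/-!
If `x T ≥ 0`, take a short interval `[T, u]` on which `f t` is `L`-Lipschitz near `x T`.
Comparing `f t x` with `f t x⁺`, quasipositivity gives `f t x i ≥ -L ‖x⁻‖` whenever `x i < 0`.
Integrating from the last time the `i`-th component was nonnegative bounds `‖(x t)⁻‖` by
`L (u - T) M`, where `M` is the maximum of `‖x⁻‖` on `[T, u]`; as `L (u - T) < 1`, `M = 0`.
Hence nonnegativity propagates to the right of every time where it holds, and continuous
induction on `[0, t]` concludes.
-/

open MeasureTheory Set Filter Topology

instance Pi.hasSolidNorm {ι : Type*} [Fintype ι] {E : ι → Type*}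
    [∀ i, NormedAddCommGroup (E i)] [∀ i, Lattice (E i)] [∀ i, HasSolidNorm (E i)] :
    HasSolidNorm (∀ i, E i) where
  solid _ b h := (pi_norm_le_iff_of_nonneg (norm_nonneg b)).2 fun i =>
    (norm_le_norm_of_abs_le_abs (h i)).trans (norm_le_pi_norm b i)

theorem norm_posPart_sub_le_of_nonneg {α : Type*} [NormedAddCommGroup α] [Lattice α]
    [HasSolidNorm α] [IsOrderedAddMonoid α] {x : α} (hx : 0 ≤ x) (y : α) :
    ‖y⁺ - x‖ ≤ ‖y - x‖ := by
  have h := norm_sup_sub_sup_le_norm y x 0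
  rwa [← posPart_def, ← posPart_def, posPart_eq_self.2 hx] at h

theorem locallyIntegrableOn_comp_of_caratheodory {E F : Type*}
    [NormedAddCommGroup E] [MeasurableSpace E] [BorelSpace E] [SecondCountableTopology E]
    [NormedAddCommGroup F] [MeasurableSpace F] [BorelSpace F] [SecondCountableTopology F]
    {f : ℝ → E → F} (hcont : ∀ t, Continuous (f t)) (hmeas : ∀ y, Measurable fun t => f t y)
    (hbound : ∀ y, ∃ m : ℝ → ℝ, (∀ a b, IntegrableOn m (Icc a b)) ∧ ∀ t, ‖f t y‖ ≤ m t)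
    (hLip : ∀ (t₀ : ℝ) (y₀ : E), ∃ ε > (0 : ℝ), ∃ L : ℝ, ∀ t, |t - t₀| < ε → ∀ y z,
      ‖y - y₀‖ < ε → ‖z - y₀‖ < ε → ‖f t y - f t z‖ ≤ L * ‖y - z‖)
    {x : ℝ → E} {S : Set ℝ} (hS : MeasurableSet S) (hx : ContinuousOn x S) :
    LocallyIntegrableOn (fun t => f t (x t)) S := by
  have hfx : AEStronglyMeasurable (fun t => f t (x t)) (volume.restrict S) :=
    ((measurable_uncurry_of_continuous_of_measurable (u := fun y t => f t y) hcont
      hmeas).comp_aemeasurable ((hx.aemeasurable hS).prodMk aemeasurable_id)).aestronglyMeasurable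
  intro t₀ ht₀
  obtain ⟨ε, hε, L, hL⟩ := hLip t₀ (x t₀)
  obtain ⟨m, hm, hmx⟩ := hbound (x t₀)
  obtain ⟨δ, hδ, hxδ⟩ := Metric.continuousWithinAt_iff.1 (hx t₀ ht₀) ε hε
  set r := min δ ε
  have hU : S ∩ Ioo (t₀ - r) (t₀ + r) ∈ 𝓝[S] t₀ :=
    inter_mem_nhdsWithin S (Ioo_mem_nhds (by simp [r, hδ, hε]) (by simp [r, hδ, hε]))
  -- near `t₀` the trajectory stays in the Lipschitz ball around `x t₀`, so `m + |L| ε` dominates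
  refine ⟨_, hU, Integrable.mono' (g := fun t => m t + |L| * ε) ?_
    (hfx.mono_measure (Measure.restrict_mono inter_subset_left le_rfl)) ?_⟩
  · exact ((hm (t₀ - r) (t₀ + r)).add (integrableOn_const measure_Icc_lt_top.ne)).mono_set
      (inter_subset_right.trans Ioo_subset_Icc_self)
  · refine ae_restrict_of_forall_mem (hS.inter measurableSet_Ioo) fun t ht => ?_
    have htr : |t - t₀| < r := abs_sub_lt_iff.2 ⟨by linarith [ht.2.2], by linarith [ht.2.1]⟩
    have hxt : ‖x t - x t₀‖ < ε := by
      simpa [dist_eq_norm] using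
        hxδ ht.1 (by rw [Real.dist_eq]; exact htr.trans_le (min_le_left _ _))
    calc ‖f t (x t)‖ ≤ ‖f t (x t₀)‖ + ‖f t (x t) - f t (x t₀)‖ := norm_le_insert' _ _
      _ ≤ m t + |L| * ε := by
        gcongr
        · exact hmx t
        · calc ‖f t (x t) - f t (x t₀)‖ ≤ L * ‖x t - x t₀‖ :=
                hL t (htr.trans_le (min_le_right _ _)) _ _ hxt (by simpa using hε)
            _ ≤ |L| * ε := mul_le_mul (le_abs_self L) hxt.le (norm_nonneg _) (abs_nonneg L)

theorem exists_nonneg_forall_Ioc_neg {v : ℝ → ℝ} {a b : ℝ} (hab : a ≤ b)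
    (hv : ContinuousOn v (Icc a b)) (ha : 0 ≤ v a) :
    ∃ τ ∈ Icc a b, 0 ≤ v τ ∧ ∀ s ∈ Ioc τ b, v s < 0 := by
  have hA : IsCompact (Icc a b ∩ v ⁻¹' Ici 0) :=
    isCompact_Icc.of_isClosed_subset
      (hv.preimage_isClosed_of_isClosed isClosed_Icc isClosed_Ici) inter_subset_left
  obtain ⟨τ, ⟨hτ, hvτ⟩, hmax⟩ := hA.exists_isGreatest ⟨a, left_mem_Icc.2 hab, ha⟩
  exact ⟨τ, hτ, hvτ, fun s hs => not_le.1 fun hvs =>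
    hs.1.not_ge (hmax ⟨⟨hτ.1.trans hs.1.le, hs.2⟩, hvs⟩)⟩

theorem neg_le_mul_of_forall_neg_imp_le {v g : ℝ → ℝ} {a b c : ℝ} (hab : a ≤ b)
    (hv : ContinuousOn v (Icc a b)) (hg : IntervalIntegrable g volume a b)
    (hinc : ∀ τ ∈ Icc a b, v b - v τ = ∫ s in τ..b, g s) (ha : 0 ≤ v a) (hc : 0 ≤ c)
    (hbound : ∀ s ∈ Ioc a b, v s < 0 → -c ≤ g s) :
    -v b ≤ c * (b - a) := by
  obtain ⟨τ, hτ, hvτ, hneg⟩ := exists_nonneg_forall_Ioc_neg hab hv ha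
  have hint : (b - τ) * -c ≤ ∫ s in τ..b, g s := by
    rw [← smul_eq_mul, ← intervalIntegral.integral_const]
    refine intervalIntegral.integral_mono_on_of_le_Ioo hτ.2 intervalIntegrable_const
      (hg.mono_set (by rw [uIcc_of_le hτ.2, uIcc_of_le hab]; exact Icc_subset_Icc_left hτ.1))
      fun s hs => hbound s ⟨hτ.1.trans_lt hs.1, hs.2.le⟩ (hneg s ⟨hs.1, hs.2.le⟩)
  have hτa : c * (b - τ) ≤ c * (b - a) := by gcongr; exact hτ.1
  linarith [hinc τ hτ]

section Quasipositive

variable {ι : Type*} [Fintype ι]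

theorem eval_intervalIntegral {F : ℝ → ι → ℝ} {a b : ℝ}
    (hF : IntervalIntegrable F volume a b) (i : ι) :
    (∫ s in a..b, F s) i = ∫ s in a..b, F s i :=
  ((ContinuousLinearMap.proj (R := ℝ) i).intervalIntegral_comp_comm hF).symm

theorem nonneg_on_Icc_of_forall_neg_imp_le {x F : ℝ → ι → ℝ} {a b L : ℝ} (hab : a ≤ b)
    (hx : ContinuousOn x (Icc a b)) (hF : IntervalIntegrable F volume a b)
    (hinc : ∀ τ ∈ Icc a b, ∀ t ∈ Icc τ b, x t - x τ = ∫ s in τ..t, F s)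
    (hL : 0 ≤ L) (hLab : L * (b - a) < 1)
    (hbound : ∀ s ∈ Icc a b, ∀ i, x s i < 0 → -(L * ‖(x s)⁻‖) ≤ F s i) (ha : 0 ≤ x a) :
    ∀ t ∈ Icc a b, 0 ≤ x t := by
  obtain ⟨z, hz, hmax⟩ := isCompact_Icc.exists_isMaxOn (nonempty_Icc.2 hab)
    (continuous_norm.comp_continuousOn (hx.neg.sup continuousOn_const) :
      ContinuousOn (fun s => ‖(x s)⁻‖) (Icc a b))
  set M := ‖(x z)⁻‖
  have hM : 0 ≤ M := norm_nonneg _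
  have hcomp : ∀ t ∈ Icc a b, ∀ i, -x t i ≤ L * M * (t - a) := by
    intro t ht i
    have hFt : IntervalIntegrable F volume a t :=
      hF.mono_set (uIcc_subset_uIcc left_mem_uIcc (mem_uIcc_of_le ht.1 ht.2))
    have hinc_i : ∀ τ ∈ Icc a t, x t i - x τ i = ∫ s in τ..t, F s i := fun τ hτ => by
      rw [← eval_intervalIntegral (hFt.mono_set (uIcc_subset_uIcc (mem_uIcc_of_le hτ.1 hτ.2)
        right_mem_uIcc)), ← hinc τ ⟨hτ.1, hτ.2.trans ht.2⟩ t ⟨hτ.2, ht.2⟩, Pi.sub_apply]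
    have hbound_i : ∀ s ∈ Ioc a t, x s i < 0 → -(L * M) ≤ F s i := fun s hs hs0 => by
      have hs' : s ∈ Icc a b := ⟨hs.1.le, hs.2.trans ht.2⟩
      have hsM : ‖(x s)⁻‖ ≤ M := hmax hs'
      linarith [hbound s hs' i hs0, mul_le_mul_of_nonneg_left hsM hL]
    exact neg_le_mul_of_forall_neg_imp_le ht.1
      ((continuous_apply i).comp_continuousOn (hx.mono (Icc_subset_Icc_right ht.2)))
      ⟨hFt.1.eval i, hFt.2.eval i⟩ hinc_i (ha i) (by positivity) hbound_i
  have hnorm : ∀ t ∈ Icc a b, ‖(x t)⁻‖ ≤ L * M * (b - a) := fun t ht => by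
    refine (pi_norm_le_iff_of_nonneg (by positivity)).2 fun i => ?_
    rw [Pi.negPart_apply, Real.norm_of_nonneg (negPart_nonneg _)]
    exact sup_le ((hcomp t ht i).trans (by gcongr; exact ht.2)) (by positivity)
  have hM0 : M = 0 := by nlinarith [hnorm z hz]
  intro t ht
  refine negPart_eq_zero.1 (norm_le_zero_iff.1 ?_)
  simpa [hM0] using hnorm t ht

def Quasipositive (g : (ι → ℝ) → ι → ℝ) : Prop :=
  ∀ y i, y i = 0 → (∀ j, j ≠ i → 0 ≤ y j) → 0 ≤ g y i

theorem Quasipositive.neg_mul_norm_negPart_le {g : (ι → ℝ) → ι → ℝ} (hg : Quasipositive g)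
    {x₀ y : ι → ℝ} {ε L : ℝ} (hx₀ : 0 ≤ x₀) (hy : ‖y - x₀‖ < ε)
    (hL : ∀ z w, ‖z - x₀‖ < ε → ‖w - x₀‖ < ε → ‖g z - g w‖ ≤ L * ‖z - w‖)
    {i : ι} (hi : y i ≤ 0) : -(L * ‖y⁻‖) ≤ g y i := by
  have hpos : 0 ≤ g y⁺ i :=
    hg y⁺ i (posPart_eq_zero.2 hi) fun j _ => posPart_nonneg (y j)
  have hsub : y - y⁺ = -y⁻ := by
    nth_rewrite 1 [← posPart_sub_negPart y]
    abel
  have hlip : ‖g y - g y⁺‖ ≤ L * ‖y⁻‖ := by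
    simpa [hsub] using hL y y⁺ hy ((norm_posPart_sub_le_of_nonneg hx₀ y).trans_lt hy)
  have hi' := (norm_le_pi_norm (g y - g y⁺) i).trans hlip
  rw [Pi.sub_apply, Real.norm_eq_abs] at hi'
  linarith [neg_abs_le (g y i - g y⁺ i)]

theorem eventually_nonneg_of_quasipositive {f : ℝ → (ι → ℝ) → ι → ℝ}
    (hquasi : ∀ t, Quasipositive (f t)) {x : ℝ → ι → ℝ} {T ε L : ℝ} (hε : 0 < ε)
    (hLip : ∀ t, |t - T| < ε → ∀ y z, ‖y - x T‖ < ε → ‖z - x T‖ < ε →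
      ‖f t y - f t z‖ ≤ L * ‖y - z‖)
    (hx : ContinuousOn x (Ici T))
    (hF : ∀ b, T ≤ b → IntervalIntegrable (fun s => f s (x s)) volume T b)
    (hinc : ∀ a b, T ≤ a → a ≤ b → x b - x a = ∫ s in a..b, f s (x s)) (hT : 0 ≤ x T) :
    ∀ᶠ t in 𝓝[≥] T, 0 ≤ x t := by
  set L' := max L 0
  have htime : ∀ᶠ t in 𝓝[≥] T, t < T + ε :=
    nhdsWithin_le_nhds (eventually_lt_nhds (lt_add_of_pos_right T hε))
  have hstate : ∀ᶠ t in 𝓝[≥] T, ‖x t - x T‖ < ε := by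
    simpa only [Metric.mem_ball, dist_eq_norm] using
      (hx T self_mem_Ici).eventually (Metric.ball_mem_nhds (x T) hε)
  have hshort : ∀ᶠ t in 𝓝[≥] T, L' * (t - T) < 1 :=
    nhdsWithin_le_nhds <| Tendsto.eventually_lt_const zero_lt_one <| by
      simpa using ((continuous_sub_right T).const_mul L').tendsto T
  obtain ⟨u, hTu, hgood⟩ := mem_nhdsGE_iff_exists_Icc_subset.1 ((htime.and hstate).and hshort)
  have hbound : ∀ s ∈ Icc T u, ∀ i, x s i < 0 → -(L' * ‖(x s)⁻‖) ≤ f s (x s) i := by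
    intro s hs i hi
    obtain ⟨⟨hsε, hxs⟩, -⟩ := hgood hs
    refine (hquasi s).neg_mul_norm_negPart_le hT hxs (fun y z hy hz => ?_) hi.le
    refine (hLip s (abs_sub_lt_iff.2 ⟨by linarith, by linarith [hs.1]⟩) y z hy hz).trans ?_
    exact mul_le_mul_of_nonneg_right (le_max_left L 0) (norm_nonneg _)
  filter_upwards [Icc_mem_nhdsGE hTu] with t ht
  exact nonneg_on_Icc_of_forall_neg_imp_le hTu.le (hx.mono Icc_subset_Ici_self) (hF u hTu.le)
    (fun τ hτ t ht => hinc τ t hτ.1 ht.1) (le_max_right L 0) (hgood (right_mem_Icc.2 hTu.le)).2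
    hbound hT t ht

end Quasipositive

/-- **Positivity of solutions of quasipositive Carathéodory ODEs.**
Let `f : ℝ × ℝ^N → ℝ^N` satisfy the Carathéodory conditions (continuity in `x` for each
fixed `t`; measurability in `t` for each fixed `x` together with a locally integrable
bound `‖f t x‖ ≤ m_x t`) and a local Lipschitz condition in `x` near every point.
If `f` is quasipositive and `x` is a Carathéodory solution of `x' = f(t, x)` on `[0, ∞)`
(i.e. continuous on `[0, ∞)` with `x t = x 0 + ∫ s in 0..t, f s (x s)` for `t ≥ 0`)
with all components of `x 0` nonnegative, then all components of `x t` are nonnegative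
for every `t ≥ 0`. -/
theorem caratheodory_quasipositive_solution_nonneg {N : ℕ}
    (f : ℝ → (Fin N → ℝ) → (Fin N → ℝ))
    -- Carathéodory condition C1: continuity in `x` for fixed `t`
    (hC1 : ∀ t : ℝ, Continuous (f t))
    -- Carathéodory condition C2: measurability in `t` for fixed `x` and a locally
    -- integrable bound
    (hC2meas : ∀ x : Fin N → ℝ, Measurable fun t => f t x)
    (hC2bound : ∀ x : Fin N → ℝ, ∃ m : ℝ → ℝ,
      (∀ a b : ℝ, IntegrableOn m (Set.Icc a b)) ∧ ∀ t : ℝ, ‖f t x‖ ≤ m t)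
    -- local Lipschitz condition in `x` in a neighbourhood of every point `(t₀, x₀)`
    (hLip : ∀ (t₀ : ℝ) (x₀ : Fin N → ℝ), ∃ ε > (0 : ℝ), ∃ L : ℝ,
      ∀ t : ℝ, |t - t₀| < ε → ∀ x y : Fin N → ℝ, ‖x - x₀‖ < ε → ‖y - x₀‖ < ε →
        ‖f t x - f t y‖ ≤ L * ‖x - y‖)
    -- quasipositivity: `f i (t, x₁, …, x_{i-1}, 0, x_{i+1}, …, x_N) ≥ 0` whenever
    -- `x j ≥ 0` for all `j ≠ i`
    (hquasi : ∀ (t : ℝ) (x : Fin N → ℝ) (i : Fin N),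
      x i = 0 → (∀ j, j ≠ i → 0 ≤ x j) → 0 ≤ f t x i)
    (x : ℝ → (Fin N → ℝ))
    (hxcont : ContinuousOn x (Set.Ici (0 : ℝ)))
    (hxsol : ∀ t : ℝ, 0 ≤ t → x t = x 0 + ∫ s in (0 : ℝ)..t, f s (x s))
    (hx0 : ∀ i, 0 ≤ x 0 i) :
    ∀ t : ℝ, 0 ≤ t → ∀ i, 0 ≤ x t i := by
  have hloc : LocallyIntegrableOn (fun s => f s (x s)) (Ici 0) :=
    locallyIntegrableOn_comp_of_caratheodory hC1 hC2meas hC2bound hLip measurableSet_Ici hxcont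
  have hII : ∀ a b, 0 ≤ a → a ≤ b → IntervalIntegrable (fun s => f s (x s)) volume a b :=
    fun a b ha hab => (hloc.integrableOn_compact_subset
      (uIcc_of_le hab ▸ (Icc_subset_Ici_iff hab).2 ha) isCompact_uIcc).intervalIntegrable
  have hinc : ∀ a b, 0 ≤ a → a ≤ b → x b - x a = ∫ s in a..b, f s (x s) := fun a b ha hab => by
    rw [hxsol b (ha.trans hab), hxsol a ha, ← intervalIntegral.integral_interval_sub_left
      (hII 0 b le_rfl (ha.trans hab)) (hII 0 a le_rfl ha)]
    abel
  have hstep : ∀ T, 0 ≤ T → 0 ≤ x T → ∀ᶠ t in 𝓝[≥] T, 0 ≤ x t := fun T hT hxT => by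
    obtain ⟨ε, hε, L, hL⟩ := hLip T (x T)
    exact eventually_nonneg_of_quasipositive hquasi hε hL (hxcont.mono (Ici_subset_Ici.2 hT))
      (fun b hb => hII T b hT hb) (fun a b ha hab => hinc a b (hT.trans ha) hab) hxT
  intro t ht
  have hnonneg : Icc 0 t ⊆ {s | 0 ≤ x s} := by
    refine IsClosed.Icc_subset_of_forall_mem_nhdsWithin ?_ hx0 fun T hT =>
      nhdsWithin_mono _ Ioi_subset_Ici_self (hstep T hT.2.1 hT.1)
    rw [inter_comm]
    exact (hxcont.mono Icc_subset_Ici_self).preimage_isClosed_of_isClosed isClosed_Icc isClosed_Ici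
  exact hnonneg ⟨ht, le_rfl⟩
end

section
/- Let Q be an N×N real matrix whose off-diagonal entries are all nonnegative and which has a path of nonsingularity. Then for every bounded interval [T₁, T₂] ⊂ (0, ∞) there exists a number α = α(T₁,T₂) > 0 such that for every nonzero p₀ ∈ K, every t ∈ [T₁, T₂], and every y ∈ ℝ^N with ‖y‖ ≤ α‖p₀‖ (Euclidean norm), the vector exp(tQ) p₀ + y lies in K, i.e. has all components ≥ 0. -/
/-- An `N × N` real matrix `Q` (with nonnegative off-diagonal entries) has a
*path of nonsingularity* if there are indices `i₁, …, iₙ` with `iₙ = i₁` such that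
all entries `Q (i_j) (i_{j+1})` are strictly positive and `{i₁, …, iₙ}` contains
all indices. -/
def HasPathOfNonsingularity {N : ℕ} (Q : Matrix (Fin N) (Fin N) ℝ) : Prop :=
  ∃ (n : ℕ) (idx : Fin (n + 1) → Fin N),
    idx (Fin.last n) = idx 0 ∧
    (∀ j : Fin n, 0 < Q (idx j.castSucc) (idx j.succ)) ∧
    (∀ k : Fin N, ∃ j, idx j = k)

/-!
Adding `c • 1` to `Q` makes it entrywise nonnegative and only multiplies `exp (t • Q)` by the
positive scalar `Real.exp (-(t * c))`. For a nonnegative matrix `A`, `exp A ≥ A ^ m / m!`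
entrywise, and the path of nonsingularity makes every entry of some power of `A` positive; so
all entries of `exp (t • Q)` are positive for `t > 0`. By compactness they are bounded below by
some `α > 0` for `t ∈ [T₁, T₂]`, and then for `p₀ ≥ 0`
`(exp (t • Q) p₀)ᵢ ≥ α ∑ⱼ p₀ⱼ ≥ α ‖p₀‖ ≥ |yᵢ|`.
-/

open Matrix NormedSpace Relation
open scoped Nat Matrix.Norms.Operator

namespace Matrix

variable {n : Type*} [Fintype n] [DecidableEq n]

theorem exists_pow_apply_pos_of_reflTransGen {A : Matrix n n ℝ} (hA : ∀ i j, 0 ≤ A i j)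
    {i j : n} (h : ReflTransGen (fun k l => 0 < A k l) i j) : ∃ m, 0 < (A ^ m) i j := by
  induction h with
  | refl => exact ⟨0, by simp⟩
  | @tail k l _ hkl ih =>
    obtain ⟨m, hm⟩ := ih
    refine ⟨m + 1, ?_⟩
    rw [pow_succ, mul_apply]
    exact (Finset.sum_pos_iff_of_nonneg fun x _ =>
      mul_nonneg (pow_apply_nonneg hA m i x) (hA x l)).2 ⟨k, Finset.mem_univ k, mul_pos hm hkl⟩

theorem pow_apply_div_factorial_le_exp_apply {A : Matrix n n ℝ} (hA : ∀ i j, 0 ≤ A i j)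
    (m : ℕ) (i j : n) : (m !⁻¹ : ℝ) * (A ^ m) i j ≤ exp A i j := by
  have hsum : HasSum (fun k : ℕ => (k !⁻¹ : ℝ) * (A ^ k) i j) (exp A i j) :=
    Pi.hasSum.1 (Pi.hasSum.1 (exp_series_hasSum_exp' (𝕂 := ℝ) A) i) j
  exact le_hasSum hsum m fun k _ => mul_nonneg (by positivity) (pow_apply_nonneg hA k i j)

theorem exp_apply_pos_of_reflTransGen {A : Matrix n n ℝ} (hA : ∀ i j, 0 ≤ A i j) {i j : n}
    (h : ReflTransGen (fun k l => 0 < A k l) i j) : 0 < exp A i j := by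
  obtain ⟨m, hm⟩ := exists_pow_apply_pos_of_reflTransGen hA h
  exact (mul_pos (by positivity) hm).trans_le (pow_apply_div_factorial_le_exp_apply hA m i j)

theorem exp_add_smul_one (A : Matrix n n ℝ) (s : ℝ) :
    exp (A + s • (1 : Matrix n n ℝ)) = Real.exp s • exp A := by
  have hs : exp (s • (1 : Matrix n n ℝ)) = Real.exp s • 1 := by
    rw [← Algebra.algebraMap_eq_smul_one, ← Algebra.algebraMap_eq_smul_one, Real.exp_eq_exp_ℝ,
      algebraMap_exp_comm]
    rfl
  rw [exp_add_of_commute _ _ ((Commute.one_right A).smul_right s), hs, mul_smul_comm, mul_one]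

theorem exists_nonneg_add_smul_one {Q : Matrix n n ℝ} (hoff : ∀ i j, i ≠ j → 0 ≤ Q i j) :
    ∃ c ≥ (0 : ℝ), ∀ i j, 0 ≤ (Q + c • 1) i j := by
  refine ⟨∑ k, |Q k k|, Finset.sum_nonneg fun k _ => abs_nonneg _, fun i j => ?_⟩
  rcases eq_or_ne i j with rfl | hij
  · have := Finset.single_le_sum (fun k _ => abs_nonneg (Q k k)) (Finset.mem_univ i)
    simp only [add_apply, smul_apply, one_apply_eq, smul_eq_mul, mul_one]
    linarith [neg_abs_le (Q i i)]
  · simpa [one_apply_ne hij] using hoff i j hij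

theorem exp_smul_apply_pos {Q : Matrix n n ℝ} (hoff : ∀ i j, i ≠ j → 0 ≤ Q i j)
    (hQ : ∀ i j, ReflTransGen (fun k l => 0 < Q k l) i j) {t : ℝ} (ht : 0 < t) (i j : n) :
    0 < exp (t • Q) i j := by
  obtain ⟨c, hc, hA⟩ := exists_nonneg_add_smul_one hoff
  have htA : ∀ k l, 0 ≤ (t • (Q + c • 1)) k l := fun k l => mul_nonneg ht.le (hA k l)
  have hconn : ReflTransGen (fun k l => 0 < (t • (Q + c • 1)) k l) i j := by
    refine ReflTransGen.mono (fun k l hkl => mul_pos ht ?_) _ _ (hQ i j)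
    rcases eq_or_ne k l with rfl | hkl'
    · simpa using add_pos_of_pos_of_nonneg hkl hc
    · simpa [one_apply_ne hkl'] using hkl
  have hsplit : t • Q = t • (Q + c • 1) + (-(t * c)) • (1 : Matrix n n ℝ) := by module
  rw [hsplit, exp_add_smul_one, smul_apply, smul_eq_mul]
  exact mul_pos (Real.exp_pos _) (exp_apply_pos_of_reflTransGen htA hconn)

theorem continuous_exp_smul_apply (Q : Matrix n n ℝ) (i j : n) :
    Continuous fun t : ℝ => exp (t • Q) i j :=
  (exp_continuous.comp (continuous_id.smul continuous_const)).matrix_elem i j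

theorem exists_pos_le_exp_smul_apply {Q : Matrix n n ℝ} (hoff : ∀ i j, i ≠ j → 0 ≤ Q i j)
    (hQ : ∀ i j, ReflTransGen (fun k l => 0 < Q k l) i j) {s : Set ℝ} (hs : IsCompact s)
    (hs0 : s ⊆ Set.Ioi 0) : ∃ β > 0, ∀ t ∈ s, ∀ i j, β ≤ exp (t • Q) i j := by
  let : TopologicalSpace n := ⊥
  have : DiscreteTopology n := ⟨rfl⟩
  have hcont : Continuous fun x : ℝ × n × n => exp (x.1 • Q) x.2.1 x.2.2 :=
    continuous_prod_of_discrete_right.2 fun ij => continuous_exp_smul_apply Q ij.1 ij.2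
  obtain ⟨β, hβ, hle⟩ := (hs.prod isCompact_univ).exists_forall_le' hcont.continuousOn
    fun x hx => exp_smul_apply_pos hoff hQ (hs0 hx.1) x.2.1 x.2.2
  exact ⟨β, hβ, fun t ht i j => hle (t, i, j) ⟨ht, Set.mem_univ _⟩⟩

omit [DecidableEq n] in
theorem mul_norm_le_mulVec_apply {M : Matrix n n ℝ} {β : ℝ} {i : n} (hβ : 0 ≤ β)
    (hM : ∀ j, β ≤ M i j) {p : EuclideanSpace ℝ n} (hp : ∀ j, 0 ≤ p j) :
    β * ‖p‖ ≤ (M *ᵥ p.ofLp) i := by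
  have hnorm : ‖p‖ ≤ ∑ j, p j := by
    rw [EuclideanSpace.norm_eq, ← Real.sqrt_sq (Finset.sum_nonneg fun j _ => hp j)]
    refine Real.sqrt_le_sqrt ?_
    simpa only [Real.norm_eq_abs, sq_abs] using
      Finset.sum_sq_le_sq_sum_of_nonneg fun j _ => hp j
  calc β * ‖p‖ ≤ ∑ j, β * p j := by rw [← Finset.mul_sum]; gcongr
    _ ≤ ∑ j, M i j * p j := by gcongr with j; exacts [hp j, hM j]
    _ = (M *ᵥ p.ofLp) i := rfl

end Matrix

theorem HasPathOfNonsingularity.reflTransGen {N : ℕ} {Q : Matrix (Fin N) (Fin N) ℝ}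
    (hQ : HasPathOfNonsingularity Q) (i j : Fin N) :
    ReflTransGen (fun k l => 0 < Q k l) i j := by
  obtain ⟨n, idx, hcyc, hedge, hsurj⟩ := hQ
  have hfrom : ∀ b, ReflTransGen (fun k l => 0 < Q k l) (idx 0) (idx b) :=
    Fin.induction .refl fun b ih => ih.tail (hedge b)
  have hto : ∀ a, ReflTransGen (fun k l => 0 < Q k l) (idx a) (idx (Fin.last n)) :=
    Fin.reverseInduction .refl fun a ih => ih.head (hedge a)
  obtain ⟨a, rfl⟩ := hsurj i
  obtain ⟨b, rfl⟩ := hsurj j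
  exact (hto a).trans (hcyc ▸ hfrom b)

theorem exp_mulVec_interior_uniform_general {N : ℕ}
    (Q : Matrix (Fin N) (Fin N) ℝ)
    (hoff : ∀ i j : Fin N, i ≠ j → 0 ≤ Q i j)
    (hpath : HasPathOfNonsingularity Q)
    (T₁ T₂ : ℝ) (hT₁ : 0 < T₁) :
    ∃ α > (0 : ℝ), ∀ p₀ : EuclideanSpace ℝ (Fin N), (∀ i, 0 ≤ p₀ i) → p₀ ≠ 0 →
      ∀ t ∈ Set.Icc T₁ T₂, ∀ y : EuclideanSpace ℝ (Fin N), ‖y‖ ≤ α * ‖p₀‖ →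
        ∀ i, 0 ≤ (NormedSpace.exp (t • Q)).mulVec p₀.ofLp i + y i := by
  obtain ⟨α, hα, hle⟩ := exists_pos_le_exp_smul_apply hoff hpath.reflTransGen isCompact_Icc
    fun t ht => hT₁.trans_le ht.1
  refine ⟨α, hα, fun p₀ hp₀ _ t ht y hy i => ?_⟩
  have hlow := mul_norm_le_mulVec_apply hα.le (hle t ht i) hp₀
  have hyi : |y i| ≤ ‖y‖ := PiLp.norm_apply_le y i
  linarith [neg_abs_le (y i)]

/-- If `Q` has nonnegative off-diagonal entries and a path of nonsingularity, then for every
bounded interval `[T₁, T₂] ⊂ (0, ∞)` there is `α > 0` such that, for every nonzero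
componentwise-nonnegative `p₀`, every `t ∈ [T₁, T₂]` and every `y` with `‖y‖ ≤ α ‖p₀‖`
(Euclidean norm), the vector `exp (t Q) p₀ + y` has all components nonnegative. -/
theorem exp_mulVec_interior_uniform {N : ℕ}
    (Q : Matrix (Fin N) (Fin N) ℝ)
    (hoff : ∀ i j : Fin N, i ≠ j → 0 ≤ Q i j)
    (hpath : HasPathOfNonsingularity Q)
    (T₁ T₂ : ℝ) (hT₁ : 0 < T₁) (hT₁₂ : T₁ ≤ T₂) :
    ∃ α > (0 : ℝ), ∀ p₀ : EuclideanSpace ℝ (Fin N), (∀ i, 0 ≤ p₀ i) → p₀ ≠ 0 →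
      ∀ t ∈ Set.Icc T₁ T₂, ∀ y : EuclideanSpace ℝ (Fin N), ‖y‖ ≤ α * ‖p₀‖ →
        ∀ i, 0 ≤ (NormedSpace.exp (t • Q)).mulVec p₀.ofLp i + y i :=
  exp_mulVec_interior_uniform_general Q hoff hpath T₁ T₂ hT₁
end

section
/- Let Q : ℝ → M_N(ℝ) be a measurable matrix-valued function with uniformly bounded entries such that Q(t) has nonnegative off-diagonal entries for every t (so the vector field x ↦ Q(t)x is quasipositive). Let w : ℝ → ℝ^N be a measurable, locally integrable function with all components w_i(t) ≥ 0 for all t ≥ 0. If x : [0,∞) → ℝ^N is a continuous function satisfying x(t) = ∫₀ᵗ (Q(s) x(s) + w(s)) ds for all t ≥ 0 (i.e. a Carathéodory solution of dx/dt = Q(t)x + w(t) with x(0) = 0), then x(t) has all components ≥ 0 for every t ≥ 0. -/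
/-!
The negative part `u t = ‖(x t)⁻‖` satisfies `u t ≤ K * ∫₀ᵗ u` with `K = N * C`. Indeed, if
`x t i < 0`, integrate the equation from the last time `r ≤ t` with `x r i ≥ 0`: on `(r, t]`
the component `x i` is nonpositive, so `-Q_ii x_i ≤ |Q_ii| (x_i)⁻`, quasipositivity gives
`-Q_ij x_j ≤ Q_ij (x_j)⁻` for `j ≠ i`, and `w_i ≥ 0` only helps. Grönwall's inequality with
zero initial value then forces `u = 0`.
-/

open MeasureTheory Set Matrix

lemma neg_mul_le_abs_mul_negPart {a b : ℝ} (h : 0 ≤ a ∨ b ≤ 0) : -(a * b) ≤ |a| * b⁻ := by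
  rcases h with ha | hb
  · rw [abs_of_nonneg ha, ← mul_neg]
    exact mul_le_mul_of_nonneg_left (neg_le_negPart b) ha
  · rw [negPart_eq_neg.2 hb, ← mul_neg]
    exact mul_le_mul_of_nonneg_right (le_abs_self a) (neg_nonneg.2 hb)

lemma Continuous.pi_negPart {ι X : Type*} [TopologicalSpace X] {y : X → ι → ℝ}
    (hy : Continuous y) : Continuous fun s => (y s)⁻ :=
  continuous_pi fun i => (continuous_pi_iff.1 hy i).neg.max continuous_const

lemma ContinuousOn.exists_last_nonneg {g : ℝ → ℝ} {a b : ℝ} (hg : ContinuousOn g (Icc a b))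
    (hab : a ≤ b) (ha : 0 ≤ g a) : ∃ r ∈ Icc a b, 0 ≤ g r ∧ ∀ s ∈ Ioc r b, g s < 0 := by
  set S := {s ∈ Icc a b | 0 ≤ g s}
  have hS_closed : IsClosed S := hg.preimage_isClosed_of_isClosed isClosed_Icc isClosed_Ici
  have hS_bdd : BddAbove S := bddAbove_Icc.mono fun s hs => hs.1
  have hrS : sSup S ∈ S := hS_closed.csSup_mem ⟨a, ⟨left_mem_Icc.2 hab, ha⟩⟩ hS_bdd
  refine ⟨sSup S, hrS.1, hrS.2, fun s hs => not_le.1 fun hgs => ?_⟩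
  exact (le_csSup hS_bdd ⟨⟨hrS.1.1.trans hs.1.le, hs.2⟩, hgs⟩).not_gt hs.1

lemma MeasureTheory.LocallyIntegrable.intervalIntegrable {E : Type*} [NormedAddCommGroup E]
    {μ : Measure ℝ} {f : ℝ → E} (hf : LocallyIntegrable f μ) (a b : ℝ) :
    IntervalIntegrable f μ a b :=
  intervalIntegrable_iff.2 ((hf.integrableOn_isCompact isCompact_uIcc).mono_set uIoc_subset_uIcc)

lemma eq_zero_of_le_mul_integral {u : ℝ → ℝ} {K : ℝ} (hu : Continuous u)
    (hu_nonneg : ∀ t, 0 ≤ u t) (hle : ∀ t, 0 ≤ t → u t ≤ K * ∫ s in 0..t, u s) {t : ℝ}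
    (ht : 0 ≤ t) : u t = 0 := by
  set v : ℝ → ℝ := fun t => ∫ s in 0..t, u s
  have hv_deriv (s : ℝ) : HasDerivAt v (u s) s :=
    intervalIntegral.integral_hasDerivAt_right (hu.intervalIntegrable _ _)
      hu.stronglyMeasurable.stronglyMeasurableAtFilter hu.continuousAt
  have hv_nonpos : v t ≤ 0 := by
    have hgronwall := le_gronwallBound_of_liminf_deriv_right_le (f := v) (f' := u) (δ := 0)
      (K := K) (ε := 0) (b := t) (fun s _ => (hv_deriv s).continuousAt.continuousWithinAt)
      (fun s _ r hr => (hv_deriv s).hasDerivWithinAt.liminf_right_slope_le hr)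
      (by simp [v]) (fun s hs => by simpa using hle s hs.1) t ⟨ht, le_rfl⟩
    simpa [gronwallBound_ε0_δ0] using hgronwall
  have hv_nonneg : 0 ≤ v t := intervalIntegral.integral_nonneg ht fun s _ => hu_nonneg s
  have hut : u t ≤ K * v t := hle t ht
  rw [le_antisymm hv_nonpos hv_nonneg, mul_zero] at hut
  exact le_antisymm hut (hu_nonneg t)

variable {ι : Type*} [Fintype ι]

lemma Matrix.neg_mulVec_apply_le_of_apply_nonpos (A : Matrix ι ι ℝ) {C : ℝ}
    (hA : ∀ i j, |A i j| ≤ C) (hA_off : ∀ i j, i ≠ j → 0 ≤ A i j) {v : ι → ℝ} {i : ι}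
    (hvi : v i ≤ 0) : -(A *ᵥ v) i ≤ Fintype.card ι * C * ‖v⁻‖ := by
  have hentry (j : ι) : -(A i j * v j) ≤ C * ‖v⁻‖ := by
    have hsign : 0 ≤ A i j ∨ v j ≤ 0 := by
      by_cases hij : i = j
      · exact Or.inr (hij ▸ hvi)
      · exact Or.inl (hA_off i j hij)
    calc -(A i j * v j) ≤ |A i j| * (v j)⁻ := neg_mul_le_abs_mul_negPart hsign
      _ ≤ |A i j| * ‖v⁻‖ := by
          gcongr
          simpa [Real.norm_of_nonneg (negPart_nonneg _)] using norm_le_pi_norm v⁻ j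
      _ ≤ C * ‖v⁻‖ := by gcongr; exact hA i j
  calc -(A *ᵥ v) i = ∑ j, -(A i j * v j) := by
        simp only [Matrix.mulVec, dotProduct, Finset.sum_neg_distrib]
    _ ≤ ∑ _j : ι, C * ‖v⁻‖ := Finset.sum_le_sum fun j _ => hentry j
    _ = Fintype.card ι * C * ‖v⁻‖ := by simp [mul_assoc]

lemma locallyIntegrable_mulVec {Q : ℝ → Matrix ι ι ℝ} (hQ : ∀ i j, Measurable fun t => Q t i j)
    {C : ℝ} (hQC : ∀ t i j, |Q t i j| ≤ C) {y : ℝ → ι → ℝ} (hy : Continuous y) :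
    LocallyIntegrable (fun t => Q t *ᵥ y t) := by
  rw [locallyIntegrable_iff]
  intro K hK
  refine Integrable.of_eval fun i => ?_
  simp only [Matrix.mulVec, dotProduct]
  refine integrable_finsetSum _ fun j _ => ?_
  refine Integrable.bdd_mul (c := C) ?_ (hQ i j).aestronglyMeasurable
    (ae_of_all _ fun t => hQC t i j)
  exact (continuous_pi_iff.1 hy j).continuousOn.integrableOn_compact hK

section IntegralEquation

variable {y f : ℝ → ι → ℝ} {K : ℝ}

lemma norm_negPart_le_mul_integral_of_eq_integral (hy : Continuous y) (hf : LocallyIntegrable f)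
    (hK : 0 ≤ K) (hsol : ∀ t, 0 ≤ t → y t = ∫ s in 0..t, f s)
    (hquasi : ∀ s, 0 ≤ s → ∀ i, y s i ≤ 0 → -f s i ≤ K * ‖(y s)⁻‖) {t : ℝ} (ht : 0 ≤ t) :
    ‖(y t)⁻‖ ≤ K * ∫ s in 0..t, ‖(y s)⁻‖ := by
  set u : ℝ → ℝ := fun s => ‖(y s)⁻‖
  have hu : Continuous u := hy.pi_negPart.norm
  have hbound_nonneg : 0 ≤ K * ∫ s in 0..t, u s :=
    mul_nonneg hK (intervalIntegral.integral_nonneg ht fun s _ => norm_nonneg _)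
  rw [pi_norm_le_iff_of_nonneg hbound_nonneg]
  intro i
  rw [Pi.negPart_apply, Real.norm_of_nonneg (negPart_nonneg _)]
  rcases le_or_gt 0 (y t i) with hyt | hyt
  · rwa [negPart_eq_zero.2 hyt]
  have hy0 : 0 ≤ y 0 i := by simp [hsol 0 le_rfl]
  obtain ⟨r, ⟨hr, hrt⟩, hyr, hneg⟩ :=
    (continuous_pi_iff.1 hy i).continuousOn.exists_last_nonneg ht hy0
  have hincr : y t i - y r i = ∫ s in r..t, f s i := by
    rw [← Pi.sub_apply, hsol t ht, hsol r hr,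
      intervalIntegral.integral_interval_sub_left (hf.intervalIntegrable _ _)
        (hf.intervalIntegrable _ _)]
    exact ((ContinuousLinearMap.proj (R := ℝ) (φ := fun _ : ι => ℝ) i).intervalIntegral_comp_comm
      (hf.intervalIntegrable _ _)).symm
  have hfi : IntervalIntegrable (fun s => f s i) volume r t :=
    ⟨(hf.intervalIntegrable r t).1.eval i, (hf.intervalIntegrable r t).2.eval i⟩
  have hKu : Continuous fun s => K * u s := continuous_const.mul hu
  calc (y t i)⁻ = -(y t i) := negPart_eq_neg.2 hyt.le
    _ ≤ -(y t i - y r i) := by linarith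
    _ = ∫ s in r..t, -f s i := by rw [hincr, intervalIntegral.integral_neg]
    _ ≤ ∫ s in r..t, K * u s := by
        refine intervalIntegral.integral_mono_on_of_le_Ioo hrt
          hfi.neg (hKu.intervalIntegrable _ _) fun s hs => ?_
        exact hquasi s (hr.trans hs.1.le) i (hneg s (Ioo_subset_Ioc_self hs)).le
    _ ≤ ∫ s in 0..t, K * u s :=
        intervalIntegral.integral_mono_interval hr hrt le_rfl
          (ae_of_all _ fun s => mul_nonneg hK (norm_nonneg _)) (hKu.intervalIntegrable _ _)
    _ = K * ∫ s in 0..t, u s := intervalIntegral.integral_const_mul K u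

lemma nonneg_of_eq_integral_of_neg_apply_le (hy : Continuous y) (hf : LocallyIntegrable f)
    (hK : 0 ≤ K) (hsol : ∀ t, 0 ≤ t → y t = ∫ s in 0..t, f s)
    (hquasi : ∀ s, 0 ≤ s → ∀ i, y s i ≤ 0 → -f s i ≤ K * ‖(y s)⁻‖) {t : ℝ} (ht : 0 ≤ t) :
    0 ≤ y t := by
  have hnorm : ‖(y t)⁻‖ = 0 :=
    eq_zero_of_le_mul_integral hy.pi_negPart.norm (fun s => norm_nonneg _)
      (fun s hs => norm_negPart_le_mul_integral_of_eq_integral hy hf hK hsol hquasi hs) ht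
  exact negPart_eq_zero.1 (norm_eq_zero.1 hnorm)

end IntegralEquation

theorem linear_caratheodory_forced_solution_nonneg_general {N : ℕ}
    (Q : ℝ → Matrix (Fin N) (Fin N) ℝ)
    (hQmeas : ∀ i j : Fin N, Measurable fun t => Q t i j)
    (C : ℝ) (hC : 0 < C)
    (hQbound : ∀ (t : ℝ) (i j : Fin N), |Q t i j| ≤ C)
    (hQoff : ∀ (t : ℝ) (i j : Fin N), i ≠ j → 0 ≤ Q t i j)
    (w : ℝ → (Fin N → ℝ))
    (hwint : LocallyIntegrable w volume)
    (hwpos : ∀ t : ℝ, 0 ≤ t → ∀ i, 0 ≤ w t i)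
    (x : ℝ → (Fin N → ℝ))
    (hxcont : ContinuousOn x (Set.Ici (0 : ℝ)))
    (hxsol : ∀ t : ℝ, 0 ≤ t → x t = ∫ s in (0 : ℝ)..t, ((Q s).mulVec (x s) + w s)) :
    ∀ t : ℝ, 0 ≤ t → ∀ i, 0 ≤ x t i := by
  set y : ℝ → Fin N → ℝ := fun t => x (max t 0)
  have hy : Continuous y :=
    hxcont.comp_continuous (continuous_id.max continuous_const) fun t => le_max_right t 0
  have hyx (t : ℝ) (ht : 0 ≤ t) : y t = x t := by simp only [y, max_eq_left ht]
  have hsol (t : ℝ) (ht : 0 ≤ t) : y t = ∫ s in 0..t, (Q s *ᵥ y s + w s) := by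
    rw [hyx t ht, hxsol t ht]
    refine intervalIntegral.integral_congr fun s hs => ?_
    rw [uIcc_of_le ht] at hs
    simp only [hyx s hs.1]
  have hquasi (s : ℝ) (hs : 0 ≤ s) (i : Fin N) (hyi : y s i ≤ 0) :
      -(Q s *ᵥ y s + w s) i ≤ N * C * ‖(y s)⁻‖ := by
    have hQy := (Q s).neg_mulVec_apply_le_of_apply_nonpos (hQbound s) (hQoff s) hyi
    rw [Fintype.card_fin] at hQy
    simp only [Pi.add_apply]
    linarith [hwpos s hs i]
  intro t ht i
  rw [← hyx t ht]
  have hf := (locallyIntegrable_mulVec hQmeas hQbound hy).add hwint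
  exact nonneg_of_eq_integral_of_neg_apply_le hy hf (by positivity) hsol hquasi ht i

/-- **Positivity for linear Carathéodory ODEs with quasipositive matrices and
nonnegative forcing.** Let `Q : ℝ → M_N(ℝ)` be measurable with uniformly bounded
entries and with nonnegative off-diagonal entries for every `t`, and let
`w : ℝ → ℝ^N` be measurable, locally integrable, with nonnegative components for
`t ≥ 0`. If `x : [0, ∞) → ℝ^N` is a continuous function with
`x t = ∫ s in 0..t, (Q s (x s) + w s)` for all `t ≥ 0` (a Carathéodory solution of
`x' = Q(t) x + w(t)`, `x 0 = 0`), then all components of `x t` are nonnegative for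
every `t ≥ 0`. -/
theorem linear_caratheodory_forced_solution_nonneg {N : ℕ}
    (Q : ℝ → Matrix (Fin N) (Fin N) ℝ)
    (hQmeas : ∀ i j : Fin N, Measurable fun t => Q t i j)
    (C : ℝ) (hC : 0 < C)
    (hQbound : ∀ (t : ℝ) (i j : Fin N), |Q t i j| ≤ C)
    (hQoff : ∀ (t : ℝ) (i j : Fin N), i ≠ j → 0 ≤ Q t i j)
    (w : ℝ → (Fin N → ℝ))
    (hwmeas : Measurable w)
    (hwint : LocallyIntegrable w volume)
    (hwpos : ∀ t : ℝ, 0 ≤ t → ∀ i, 0 ≤ w t i)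
    (x : ℝ → (Fin N → ℝ))
    (hxcont : ContinuousOn x (Set.Ici (0 : ℝ)))
    (hxsol : ∀ t : ℝ, 0 ≤ t → x t = ∫ s in (0 : ℝ)..t, ((Q s).mulVec (x s) + w s)) :
    ∀ t : ℝ, 0 ≤ t → ∀ i, 0 ≤ x t i :=
  linear_caratheodory_forced_solution_nonneg_general Q hQmeas C hC hQbound hQoff w hwint hwpos x
    hxcont hxsol
end

section
/- Fix constants 0 < c ≤ C and N ≥ 2, and let Q : ℝ → M_N(ℝ) be a measurable family of tridiagonal generators with off-diagonal entries in [c, C]. Then for every t > 0, every nonzero vector p₀ ∈ ℝ^N with all components ≥ 0, and every continuous p : [0,∞) → ℝ^N satisfying p(s) = p₀ + ∫₀ˢ Q(r) p(r) dr for all s ≥ 0, the vector p(t) has all components strictly positive. -/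
/-!
Write `(Q *ᵥ p) i = Q i i * p i + ∑_{j ≠ i} Q i j * p j`. The off-diagonal entries are nonnegative
and every row is bounded by some `K`, so a component can only decrease through its bounded diagonal
term. Since `p` is merely absolutely continuous, all comparisons are first-exit arguments against
exponential barriers: against `-ε exp (K (r - s))` they show that `p` stays nonnegative, and against
an exponentially decaying positive barrier that a positive component stays positive. If `p j > 0`
at all positive times and `i` is a neighbour of `j`, then `p i` cannot vanish on an interval
`(0, s]`, because there `(p i)' ≥ c * p j > 0`. So positivity spreads from a component where `p₀`
is positive along the path `0 — 1 — ⋯ — N - 1`.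
-/

open MeasureTheory

/-- A *measurable family of tridiagonal generators with off-diagonal entries in
`[c, C]`*: a measurable map `Q : ℝ → M_N(ℝ)` such that for every `t` the matrix
`Q t` vanishes off the three central diagonals, has its sub- and super-diagonal
entries in `[c, C]`, and all its columns sum to zero. -/
def IsTridiagGenFamily (N : ℕ) (c C : ℝ) (Q : ℝ → Matrix (Fin N) (Fin N) ℝ) : Prop :=
  (∀ i j : Fin N, Measurable fun t => Q t i j) ∧
  ∀ t : ℝ,
    (∀ i j : Fin N, ((i : ℕ) + 2 ≤ (j : ℕ) ∨ (j : ℕ) + 2 ≤ (i : ℕ)) → Q t i j = 0) ∧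
    (∀ i j : Fin N, ((i : ℕ) + 1 = (j : ℕ) ∨ (j : ℕ) + 1 = (i : ℕ)) →
      Q t i j ∈ Set.Icc c C) ∧
    (∀ j, ∑ i, Q t i j = 0)

open Set Real intervalIntegral Matrix

theorem integral_eq_sub_of_eq_add_integral {u g : ℝ → ℝ} {a b σ τ : ℝ}
    (hg : IntervalIntegrable g volume a b)
    (heq : ∀ s ∈ Icc a b, u s = u a + ∫ r in a..s, g r)
    (hσ : σ ∈ Icc a b) (hτ : τ ∈ Icc a b) :
    ∫ r in σ..τ, g r = u τ - u σ := by
  have hg' : ∀ s ∈ Icc a b, IntervalIntegrable g volume a s := fun s hs =>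
    hg.mono_set (uIcc_subset_uIcc left_mem_uIcc (mem_uIcc_of_le hs.1 hs.2))
  rw [heq τ hτ, heq σ hσ, ← integral_interval_sub_left (hg' τ hτ) (hg' σ hσ)]
  ring

theorem integral_mul_mul_exp_mul_sub (L x₀ c a b : ℝ) :
    ∫ r in a..b, L * (x₀ * exp (L * (r - c))) =
      x₀ * exp (L * (b - c)) - x₀ * exp (L * (a - c)) := by
  refine integral_eq_sub_of_hasDerivAt (f := fun r => x₀ * exp (L * (r - c))) (fun r _ => ?_)
    (by apply Continuous.intervalIntegrable; fun_prop)
  exact ((((hasDerivAt_id r).sub_const c).const_mul L).exp.const_mul x₀).congr_deriv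
    (by simp only [id]; ring)

theorem forall_pos_of_eq_add_integral {ι : Type*} [Finite ι] {u g : ι → ℝ → ℝ} {a b δ : ℝ}
    (hab : a ≤ b) (hu : ∀ i, ContinuousOn (u i) (Icc a b))
    (hg : ∀ i, IntervalIntegrable (g i) volume a b)
    (heq : ∀ i, ∀ s ∈ Icc a b, u i s = u i a + ∫ r in a..s, g i r)
    (hδ : 0 < δ) (hua : ∀ i, δ ≤ u i a)
    (hg_nonneg : ∀ r ∈ Icc a b, (∀ j, 0 < u j r) → ∀ i, u i r < δ → 0 ≤ g i r) :
    ∀ i, 0 < u i b := by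
  -- `τ` is the first time some `u i` is `≤ 0` and `σ` the last time before it with `u i ≥ δ`;
  -- on `(σ, τ)` we have `g i ≥ 0`, yet `u i` drops from `≥ δ` to `≤ 0`.
  by_contra! hb
  set Z := ⋃ i, Icc a b ∩ u i ⁻¹' Iic 0
  have hZ : IsCompact Z := isCompact_Icc.of_isClosed_subset
    (isClosed_iUnion_of_finite fun i =>
      (hu i).preimage_isClosed_of_isClosed isClosed_Icc isClosed_Iic)
    (iUnion_subset fun _ => inter_subset_left)
  obtain ⟨i, hib⟩ := hb
  obtain ⟨τ, hτZ, hτ_least⟩ := hZ.exists_isLeast ⟨b, mem_iUnion.2 ⟨i, ⟨hab, le_rfl⟩, hib⟩⟩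
  obtain ⟨i, hτ, hiτ⟩ := mem_iUnion.1 hτZ
  have hpos_before : ∀ r ∈ Icc a b, r < τ → ∀ j, 0 < u j r := by
    intro r hr hrτ j
    by_contra! hjr
    exact hrτ.not_ge (hτ_least (mem_iUnion.2 ⟨j, hr, hjr⟩))
  set S := Icc a τ ∩ u i ⁻¹' Ici δ
  have hS : IsCompact S := isCompact_Icc.of_isClosed_subset
    (((hu i).mono (Icc_subset_Icc_right hτ.2)).preimage_isClosed_of_isClosed isClosed_Icc
      isClosed_Ici) inter_subset_left
  obtain ⟨σ, ⟨hσ, hiσ⟩, hσ_greatest⟩ := hS.exists_isGreatest ⟨a, ⟨le_rfl, hτ.1⟩, hua i⟩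
  have hστ : σ < τ := lt_of_le_of_ne hσ.2 fun h => by
    simp only [mem_preimage, mem_Ici, mem_Iic] at hiσ hiτ
    rw [h] at hiσ
    linarith
  have hσ' : σ ∈ Icc a b := ⟨hσ.1, hσ.2.trans hτ.2⟩
  have hint : 0 ≤ ∫ r in σ..τ, g i r := by
    rw [integral_of_le hστ.le, integral_Ioc_eq_integral_Ioo]
    refine setIntegral_nonneg measurableSet_Ioo fun r hr => ?_
    have hr' : r ∈ Icc a b := ⟨hσ.1.trans hr.1.le, hr.2.le.trans hτ.2⟩
    refine hg_nonneg r hr' (hpos_before r hr' hr.2) i (not_le.1 fun h => ?_)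
    exact hr.1.not_ge (hσ_greatest ⟨⟨hr'.1, hr.2.le⟩, h⟩)
  rw [integral_eq_sub_of_eq_add_integral (hg i) (heq i) hσ' hτ] at hint
  simp only [mem_preimage, mem_Ici, mem_Iic] at hiσ hiτ
  linarith

/-- The barrier is `h a / 2 * exp (-2K (s - a))`. -/
theorem pos_of_eq_add_integral_of_neg_mul_le {h g : ℝ → ℝ} {a b K : ℝ} (hK : 0 ≤ K)
    (hab : a ≤ b) (hh : ContinuousOn h (Icc a b)) (hg : IntervalIntegrable g volume a b)
    (heq : ∀ s ∈ Icc a b, h s = h a + ∫ r in a..s, g r)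
    (hlow : ∀ r ∈ Icc a b, -(K * h r) ≤ g r) (ha : 0 < h a) : 0 < h b := by
  set L := -(2 * K)
  set β : ℝ → ℝ := fun s => h a / 2 * exp (L * (s - a))
  have hβ_pos : ∀ s, 0 < β s := fun s => by positivity
  have hβa : β a = h a / 2 := by simp [β]
  have hβ_anti : ∀ r ∈ Icc a b, β b ≤ β r := fun r hr => by
    have : L * (b - a) ≤ L * (r - a) := by nlinarith [hr.2]
    exact mul_le_mul_of_nonneg_left (exp_le_exp.2 this) (by positivity)
  have hβ_int : IntervalIntegrable (fun r => L * β r) volume a b := by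
    apply Continuous.intervalIntegrable; fun_prop
  have key := forall_pos_of_eq_add_integral (ι := Unit) (u := fun _ s => h s - β s)
    (g := fun _ r => g r - L * β r) hab (fun _ => hh.sub (by fun_prop))
    (fun _ => hg.sub hβ_int) (fun _ s hs => ?_) (hβ_pos b) (fun _ => ?_) (fun r hr _ _ hr' => ?_) ()
  · linarith [hβ_pos b]
  · have hs' : IntervalIntegrable g volume a s :=
      hg.mono_set (uIcc_subset_uIcc left_mem_uIcc (mem_uIcc_of_le hs.1 hs.2))
    have hβs : IntervalIntegrable (fun r => L * β r) volume a s := by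
      apply Continuous.intervalIntegrable; fun_prop
    rw [integral_sub hs' hβs, integral_mul_mul_exp_mul_sub, heq s hs]
    ring
  · linarith [hβ_anti a ⟨le_rfl, hab⟩]
  · have := hβ_anti r hr
    have := hlow r hr
    nlinarith

theorem Matrix.mul_le_mulVec_apply {ι R : Type*} [Fintype ι] [NonUnitalNonAssocSemiring R]
    [PartialOrder R] [IsOrderedAddMonoid R] {A : Matrix ι ι R} {x : ι → R} {i j : ι}
    (h : ∀ k, k ≠ j → 0 ≤ A i k * x k) : A i j * x j ≤ (A *ᵥ x) i := by
  classical
  rw [Matrix.mulVec, dotProduct, ← Finset.add_sum_erase _ _ (Finset.mem_univ j)]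
  exact le_add_of_nonneg_right (Finset.sum_nonneg fun k hk => h k (Finset.ne_of_mem_erase hk))

def IsIntegralSolution {ι : Type*} [Fintype ι] (Q : ℝ → Matrix ι ι ℝ) (p₀ : ι → ℝ)
    (p : ℝ → ι → ℝ) : Prop :=
  ContinuousOn p (Ici 0) ∧ ∀ s, 0 ≤ s → p s = p₀ + ∫ r in (0 : ℝ)..s, (Q r).mulVec (p r)

section MetzlerSystem

variable {ι : Type*} [Fintype ι] {Q : ℝ → Matrix ι ι ℝ} {p₀ : ι → ℝ} {p : ℝ → ι → ℝ} {K : ℝ}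

theorem integrableOn_mulVec_apply (hQ : ∀ i j, Measurable fun t => Q t i j)
    (hK : ∀ t i, ∑ j, |Q t i j| ≤ K) {a b : ℝ} (hp : ContinuousOn p (Icc a b)) (i : ι) :
    IntegrableOn (fun r => (Q r *ᵥ p r) i) (Icc a b) := by
  simp only [Matrix.mulVec, dotProduct]
  refine integrable_finsetSum _ fun j _ => ?_
  refine Integrable.bdd_mul ((continuousOn_pi.1 hp j).integrableOn_Icc)
    (hQ i j).aestronglyMeasurable (c := K) (ae_of_all _ fun t => ?_)
  exact (Finset.single_le_sum (fun k _ => abs_nonneg (Q t i k)) (Finset.mem_univ j)).trans (hK t i)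

namespace IsIntegralSolution

theorem apply_zero (hp : IsIntegralSolution Q p₀ p) : p 0 = p₀ := by
  simpa using hp.2 0 le_rfl

theorem intervalIntegrable_mulVec_apply (hQ : ∀ i j, Measurable fun t => Q t i j)
    (hK : ∀ t i, ∑ j, |Q t i j| ≤ K) (hp : IsIntegralSolution Q p₀ p) {a b : ℝ} (ha : 0 ≤ a)
    (hab : a ≤ b) (i : ι) : IntervalIntegrable (fun r => (Q r *ᵥ p r) i) volume a b := by
  refine IntegrableOn.intervalIntegrable ?_
  rw [uIcc_of_le hab]
  exact integrableOn_mulVec_apply hQ hK (hp.1.mono fun r hr => ha.trans hr.1) i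

theorem apply_eq_add_integral (hQ : ∀ i j, Measurable fun t => Q t i j)
    (hK : ∀ t i, ∑ j, |Q t i j| ≤ K) (hp : IsIntegralSolution Q p₀ p) {a : ℝ} (ha : 0 ≤ a)
    {s : ℝ} (has : a ≤ s) (i : ι) :
    p s i = p a i + ∫ r in a..s, (Q r *ᵥ p r) i := by
  have hsol : ∀ s, 0 ≤ s → p s i = p₀ i + ∫ r in (0 : ℝ)..s, (Q r *ᵥ p r) i := fun s hs => by
    rw [congrFun (hp.2 s hs) i, Pi.add_apply, integral_of_le hs, integral_of_le hs,
      eval_integral fun j => ?_]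
    exact (integrableOn_mulVec_apply hQ hK (hp.1.mono fun r hr => hr.1) j).mono_set
      Ioc_subset_Icc_self
  rw [hsol s (ha.trans has), hsol a ha, ← integral_interval_sub_left
    (hp.intervalIntegrable_mulVec_apply hQ hK le_rfl (ha.trans has) i)
    (hp.intervalIntegrable_mulVec_apply hQ hK le_rfl ha i)]
  ring

/-- Comparison with the barrier `-ε exp (K (r - s))`: a component near the barrier is negative, and
then the Metzler structure gives `(Q *ᵥ p) i ≥ -K ε exp (K (r - s))`. -/
theorem nonneg (hQ : ∀ i j, Measurable fun t => Q t i j) (hK : ∀ t i, ∑ j, |Q t i j| ≤ K)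
    (hoff : ∀ t i j, i ≠ j → 0 ≤ Q t i j) (hp : IsIntegralSolution Q p₀ p)
    (hp₀ : ∀ i, 0 ≤ p₀ i) {s : ℝ} (hs : 0 ≤ s) (i : ι) : 0 ≤ p s i := by
  have hK₀ : 0 ≤ K := (Finset.sum_nonneg fun j _ => abs_nonneg _).trans (hK 0 i)
  refine le_of_forall_pos_lt_add fun ε hε => ?_
  set e : ℝ → ℝ := fun r => ε * exp (K * (r - s))
  have he_mono : ∀ r, 0 ≤ r → e 0 ≤ e r := fun r hr =>
    mul_le_mul_of_nonneg_left (exp_le_exp.2 (by nlinarith)) hε.le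
  have key := forall_pos_of_eq_add_integral (u := fun j r => p r j + e r)
    (g := fun j r => (Q r *ᵥ p r) j + K * e r) (δ := e 0) hs
    (fun j => (continuousOn_pi.1 (hp.1.mono fun r hr => hr.1) j).add (by fun_prop))
    (fun j => (hp.intervalIntegrable_mulVec_apply hQ hK le_rfl hs j).add
      (by apply Continuous.intervalIntegrable; fun_prop))
    (fun j r hr => ?_) (by positivity) (fun j => by simp [hp.apply_zero, hp₀ j])
    (fun r hr hpos j hj => ?_) i
  · simpa [e] using key
  · rw [integral_add (hp.intervalIntegrable_mulVec_apply hQ hK le_rfl hr.1 j)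
      (by apply Continuous.intervalIntegrable; fun_prop), integral_mul_mul_exp_mul_sub,
      hp.apply_eq_add_integral hQ hK le_rfl hr.1 j]
    ring
  · have hej : ∀ k, -(|Q r j k| * e r) ≤ Q r j k * p r k := fun k => by
      have hk := hpos k
      rcases eq_or_ne j k with rfl | hjk
      · have : |p r j| ≤ e r := abs_le.2 ⟨by linarith, by linarith [he_mono r hr.1]⟩
        nlinarith [neg_abs_le (Q r j j * p r j), abs_mul (Q r j j) (p r j), abs_nonneg (Q r j j)]
      · rw [abs_of_nonneg (hoff r j k hjk)]
        nlinarith [hoff r j k hjk]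
    have hsum : -(K * e r) ≤ (Q r *ᵥ p r) j := calc
      -(K * e r) ≤ -((∑ k, |Q r j k|) * e r) := by
        have : 0 ≤ e r := by positivity
        nlinarith [hK r j]
      _ = ∑ k, -(|Q r j k| * e r) := by rw [Finset.sum_mul, Finset.sum_neg_distrib]
      _ ≤ (Q r *ᵥ p r) j := Finset.sum_le_sum fun k _ => hej k
    linarith

theorem pos_of_le (hQ : ∀ i j, Measurable fun t => Q t i j) (hK : ∀ t i, ∑ j, |Q t i j| ≤ K)
    (hoff : ∀ t i j, i ≠ j → 0 ≤ Q t i j) (hp : IsIntegralSolution Q p₀ p)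
    (hp₀ : ∀ i, 0 ≤ p₀ i) {a b : ℝ} (ha : 0 ≤ a) (hab : a ≤ b) {i : ι} (hpa : 0 < p a i) :
    0 < p b i := by
  have hK₀ : 0 ≤ K := (Finset.sum_nonneg fun j _ => abs_nonneg _).trans (hK 0 i)
  refine pos_of_eq_add_integral_of_neg_mul_le hK₀ hab
    (continuousOn_pi.1 (hp.1.mono fun r hr => ha.trans hr.1) i)
    (hp.intervalIntegrable_mulVec_apply hQ hK ha hab i)
    (fun s hs => hp.apply_eq_add_integral hQ hK ha hs.1 i) (fun r hr => ?_) hpa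
  have hpr := hp.nonneg hQ hK hoff hp₀ (ha.trans hr.1)
  have hdiag : -K ≤ Q r i i := (neg_le_neg ((Finset.single_le_sum
    (fun k _ => abs_nonneg (Q r i k)) (Finset.mem_univ i)).trans (hK r i))).trans (neg_abs_le _)
  calc -(K * p r i) ≤ Q r i i * p r i := by nlinarith [hpr i]
    _ ≤ (Q r *ᵥ p r) i :=
      Matrix.mul_le_mulVec_apply fun k hk => mul_nonneg (hoff r i k hk.symm) (hpr k)

/-- If `p i` vanished on `(0, s]`, its derivative `(Q *ᵥ p) i ≥ c * p j > 0` would make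
`p s i > 0`. -/
theorem pos_of_forall_pos_of_le_apply (hQ : ∀ i j, Measurable fun t => Q t i j)
    (hK : ∀ t i, ∑ j, |Q t i j| ≤ K) (hoff : ∀ t i j, i ≠ j → 0 ≤ Q t i j)
    (hp : IsIntegralSolution Q p₀ p) (hp₀ : ∀ i, 0 ≤ p₀ i) {c : ℝ} (hc : 0 < c) {i j : ι}
    (hij : i ≠ j) (hQij : ∀ t, c ≤ Q t i j) (hj : ∀ s, 0 < s → 0 < p s j) {s : ℝ} (hs : 0 < s) :
    0 < p s i := by
  have hnonneg := fun r (hr : r ∈ Ioc (0 : ℝ) s) => hp.nonneg hQ hK hoff hp₀ hr.1.le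
  obtain ⟨σ, hσ, hpσ⟩ : ∃ σ ∈ Ioc 0 s, 0 < p σ i := by
    by_contra! hzero
    have hlow : ∀ r ∈ Ioc 0 s, c * p r j ≤ (Q r *ᵥ p r) i := fun r hr => by
      have hpi : p r i = 0 := le_antisymm (hzero r hr) (hnonneg r hr i)
      refine (mul_le_mul_of_nonneg_right (hQij r) (hnonneg r hr j)).trans
        (Matrix.mul_le_mulVec_apply fun k hkj => ?_)
      rcases eq_or_ne k i with rfl | hki
      · rw [hpi, mul_zero]
      · exact mul_nonneg (hoff r i k hki.symm) (hnonneg r hr k)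
    have hcpj : IntervalIntegrable (fun r => c * p r j) volume 0 s :=
      ((continuousOn_pi.1 (hp.1.mono fun r hr => hr.1) j).const_smul c).intervalIntegrable_of_Icc
        hs.le
    have hint_pos : 0 < ∫ r in (0 : ℝ)..s, c * p r j :=
      intervalIntegral_pos_of_pos_on hcpj (fun r hr => mul_pos hc (hj r hr.1)) hs
    have hint_le : ∫ r in (0 : ℝ)..s, c * p r j ≤ ∫ r in (0 : ℝ)..s, (Q r *ᵥ p r) i := by
      rw [integral_of_le hs.le, integral_of_le hs.le]
      exact setIntegral_mono_on hcpj.1 (hp.intervalIntegrable_mulVec_apply hQ hK le_rfl hs.le i).1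
        measurableSet_Ioc hlow
    have := hp.apply_eq_add_integral hQ hK le_rfl hs.le i
    rw [hp.apply_zero] at this
    linarith [hzero s ⟨hs, le_rfl⟩, hp₀ i]
  exact hp.pos_of_le hQ hK hoff hp₀ hσ.1.le hσ.2 hpσ

end IsIntegralSolution

end MetzlerSystem

namespace IsTridiagGenFamily

variable {N : ℕ} {c C : ℝ} {Q : ℝ → Matrix (Fin N) (Fin N) ℝ}

theorem apply_mem_Icc_of_ne (hQ : IsTridiagGenFamily N c C Q) (hc : 0 ≤ c) (hC : 0 ≤ C)
    (t : ℝ) {i j : Fin N} (hij : i ≠ j) : Q t i j ∈ Icc 0 C := by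
  by_cases hadj : (i : ℕ) + 1 = j ∨ (j : ℕ) + 1 = i
  · have := (hQ.2 t).2.1 i j hadj
    exact ⟨hc.trans this.1, this.2⟩
  · have := Fin.val_ne_of_ne hij
    rw [(hQ.2 t).1 i j (by omega)]
    exact ⟨le_rfl, hC⟩

theorem abs_apply_le (hQ : IsTridiagGenFamily N c C Q) (hc : 0 ≤ c) (hC : 0 ≤ C)
    (t : ℝ) (i j : Fin N) : |Q t i j| ≤ N * C := by
  rcases eq_or_ne i j with rfl | hij
  · have hdiag : Q t i i = -∑ k ∈ Finset.univ.erase i, Q t k i := by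
      rw [eq_neg_iff_add_eq_zero, add_comm, Finset.sum_erase_add _ _ (Finset.mem_univ i)]
      exact (hQ.2 t).2.2 i
    have hoff : ∀ k ∈ Finset.univ.erase i, Q t k i ∈ Icc 0 C := fun k hk =>
      hQ.apply_mem_Icc_of_ne hc hC t (Finset.ne_of_mem_erase hk)
    rw [hdiag, abs_neg, abs_of_nonneg (Finset.sum_nonneg fun k hk => (hoff k hk).1)]
    calc ∑ k ∈ Finset.univ.erase i, Q t k i ≤ (Finset.univ.erase i).card • C :=
          Finset.sum_le_card_nsmul _ _ _ fun k hk => (hoff k hk).2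
      _ ≤ N * C := by
        rw [nsmul_eq_mul]
        gcongr
        simp
  · have hN : (1 : ℝ) ≤ N := by exact_mod_cast i.pos
    have := hQ.apply_mem_Icc_of_ne hc hC t hij
    rw [abs_of_nonneg this.1]
    exact this.2.trans (le_mul_of_one_le_left hC hN)

theorem sum_abs_apply_le (hQ : IsTridiagGenFamily N c C Q) (hc : 0 ≤ c) (hC : 0 ≤ C)
    (t : ℝ) (i : Fin N) : ∑ j, |Q t i j| ≤ N * (N * C) :=
  (Finset.sum_le_sum fun j _ => hQ.abs_apply_le hc hC t i j).trans (by simp)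

end IsTridiagGenFamily

theorem tridiag_solution_pos_general {N : ℕ}
    (c C : ℝ) (hc : 0 < c) (hcC : c ≤ C)
    (Q : ℝ → Matrix (Fin N) (Fin N) ℝ)
    (hQ : IsTridiagGenFamily N c C Q)
    (p₀ : Fin N → ℝ) (hp₀ : ∀ i, 0 ≤ p₀ i) (hp₀ne : p₀ ≠ 0)
    (p : ℝ → (Fin N → ℝ))
    (hpcont : ContinuousOn p (Set.Ici (0 : ℝ)))
    (hpsol : ∀ s : ℝ, 0 ≤ s → p s = p₀ + ∫ r in (0 : ℝ)..s, (Q r).mulVec (p r))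
    (t : ℝ) (ht : 0 < t) :
    ∀ i, 0 < p t i := by
  have hC : 0 ≤ C := hc.le.trans hcC
  have hK := hQ.sum_abs_apply_le hc.le hC
  have hoff : ∀ t i j, i ≠ j → 0 ≤ Q t i j := fun t _ _ hij =>
    (hQ.apply_mem_Icc_of_ne hc.le hC t hij).1
  have hp : IsIntegralSolution Q p₀ p := ⟨hpcont, hpsol⟩
  obtain ⟨i₀, hi₀⟩ : ∃ i, 0 < p₀ i := by
    by_contra! h
    exact hp₀ne (funext fun i => le_antisymm (h i) (hp₀ i))
  suffices ∀ i s, 0 < s → 0 < p s i from fun i => this i t ht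
  intro i
  obtain ⟨w⟩ := SimpleGraph.pathGraph_preconnected N i i₀
  induction w with
  | nil => exact fun s hs => hp.pos_of_le hQ.1 hK hoff hp₀ le_rfl hs.le (hp.apply_zero ▸ hi₀)
  | cons hadj _ ih =>
    have hadj := SimpleGraph.pathGraph_adj.1 hadj
    exact fun s => hp.pos_of_forall_pos_of_le_apply hQ.1 hK hoff hp₀ hc (by grind [Fin.ext_iff])
      (fun t => ((hQ.2 t).2.1 _ _ hadj).1) (ih hi₀)

/-- **Strong positivity for random tridiagonal Markov generators.** Let `Q` be a
measurable family of tridiagonal generators with off-diagonal entries in `[c, C]`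
(`0 < c ≤ C`, `N ≥ 2`). Then for every `t > 0`, every nonzero componentwise
nonnegative initial value `p₀`, and every Carathéodory solution `p` of
`p' = Q(t) p`, `p 0 = p₀`, the vector `p t` has all components strictly positive. -/
theorem tridiag_solution_pos {N : ℕ} (hN : 2 ≤ N)
    (c C : ℝ) (hc : 0 < c) (hcC : c ≤ C)
    (Q : ℝ → Matrix (Fin N) (Fin N) ℝ)
    (hQ : IsTridiagGenFamily N c C Q)
    (p₀ : Fin N → ℝ) (hp₀ : ∀ i, 0 ≤ p₀ i) (hp₀ne : p₀ ≠ 0)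
    (p : ℝ → (Fin N → ℝ))
    (hpcont : ContinuousOn p (Set.Ici (0 : ℝ)))
    (hpsol : ∀ s : ℝ, 0 ≤ s → p s = p₀ + ∫ r in (0 : ℝ)..s, (Q r).mulVec (p r))
    (t : ℝ) (ht : 0 < t) :
    ∀ i, 0 < p t i :=
  tridiag_solution_pos_general c C hc hcC Q hQ p₀ hp₀ hp₀ne p hpcont hpsol t ht
end

section
/- Fix constants 0 < c ≤ C and N ≥ 2. There exists δ = δ(c, C, N) > 0 with the following uniform dissipativity property: for every measurable family Q : ℝ → M_N(ℝ) of tridiagonal generators with off-diagonal entries in [c, C], every p₀ ∈ Σ_N, and every continuous p : [0,∞) → ℝ^N satisfying p(s) = p₀ + ∫₀ˢ Q(r) p(r) dr for all s ≥ 0, every component of p(1) is at least δ (and p(1) ∈ Σ_N). -/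
open MeasureTheory

/-- The probability simplex `Σ_N` in `ℝ^N`. -/
def probSimplex (N : ℕ) : Set (Fin N → ℝ) :=
  {p | (∑ j, p j) = 1 ∧ ∀ j, 0 ≤ p j}

/-!
Write `K = N * C`. Since the columns of `Q t` sum to zero, the total mass is conserved, and since
the off-diagonal rates are nonnegative, a Grönwall argument applied to the total negative part
`∑ᵢ (pᵢ)⁻` keeps `p` nonnegative. Each component then satisfies `pᵢ' ≥ -K pᵢ + c pⱼ` for either
neighbour `j`: it decays at most like `exp (-K t)`, and a neighbour holding mass `≥ a` on a time
interval of length `1 / N` lifts it to `≥ ρ a`, with `ρ = c (1 - exp (-C)) / K`. Some site starts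
with mass `≥ 1 / N`, and every site is at most `N - 1` steps away from it, so at time `1` every
component is `≥ exp (-K) / N * ρ ^ (N - 1)`.

As `Q` is only measurable, these differential inequalities are only available in integrated form;
they are turned into bounds by looking at the last time at which the relevant continuous function
is nonpositive.
-/

open Set Finset Matrix Real

theorem nonpos_of_le_of_forall_Ioc_pos {f : ℝ → ℝ} {a b : ℝ} (hf : ContinuousOn f (Icc a b))
    (ha : f a ≤ 0)
    (hle : ∀ s₁ s₂, a ≤ s₁ → s₁ < s₂ → s₂ ≤ b → (∀ r ∈ Ioc s₁ s₂, 0 < f r) → f s₂ ≤ f s₁) :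
    ∀ s ∈ Icc a b, f s ≤ 0 := by
  intro s hs
  by_contra! hfs
  have hclosed : IsClosed (Icc a s ∩ f ⁻¹' Iic 0) :=
    (hf.mono (Icc_subset_Icc_right hs.2)).preimage_isClosed_of_isClosed isClosed_Icc isClosed_Iic
  obtain ⟨t, ⟨⟨hat, hts⟩, hft : f t ≤ 0⟩, hlast⟩ :=
    (isCompact_Icc.of_isClosed_subset hclosed inter_subset_left).exists_isGreatest
      ⟨a, ⟨left_mem_Icc.2 hs.1, ha⟩⟩
  have hpos : ∀ r ∈ Ioc t s, 0 < f r := fun r hr => by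
    by_contra! hfr
    exact (hlast ⟨⟨hat.trans hr.1.le, hr.2⟩, hfr⟩).not_gt hr.1
  have hts' : t < s := hts.lt_of_ne fun h => (h ▸ hft).not_gt hfs
  linarith [hle t s hat hts' hs.2 hpos]

theorem eq_zero_of_le_mul_integral_s12 {E : ℝ → ℝ} {K a b : ℝ} (hE : ContinuousOn E (Icc a b))
    (hE0 : ∀ s ∈ Icc a b, 0 ≤ E s) (hle : ∀ s ∈ Icc a b, E s ≤ K * ∫ r in a..s, E r) :
    ∀ s ∈ Icc a b, E s = 0 := by
  have hint : ∀ s ∈ Icc a b, IntervalIntegrable E volume a s := fun s hs =>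
    (hE.mono (Icc_subset_Icc_right hs.2)).intervalIntegrable_of_Icc hs.1
  have hG0 : ∀ s ∈ Icc a b, 0 ≤ ∫ r in a..s, E r := fun s hs =>
    intervalIntegral.integral_nonneg hs.1 fun r hr => hE0 r ⟨hr.1, hr.2.trans hs.2⟩
  have hderiv : ∀ x ∈ Ico a b,
      HasDerivWithinAt (fun s => ∫ r in a..s, E r) (E x) (Ici x) x := fun x hx => by
    have : Fact (x ∈ Icc a b) := ⟨Ico_subset_Icc_self hx⟩
    exact (intervalIntegral.integral_hasDerivWithinAt_right (hint x this.out)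
      (hE.stronglyMeasurableAtFilter_nhdsWithin measurableSet_Icc x)
      (hE x this.out)).mono_of_mem_nhdsWithin (Icc_mem_nhdsGE_of_mem hx)
  have hcont : ContinuousOn (fun s => ∫ r in a..s, E r) (Icc a b) := by
    rcases le_or_gt a b with hab | hab
    · simpa [uIcc_of_le hab] using intervalIntegral.continuousOn_primitive_interval'
        (hint b (right_mem_Icc.2 hab)) left_mem_uIcc
    · simp [Icc_eq_empty_of_lt hab]
  have hG := eq_zero_of_abs_deriv_le_mul_abs_self_of_eq_zero_right hcont hderiv (by simp)
    fun x hx => by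
      rw [Real.norm_eq_abs, Real.norm_eq_abs, abs_of_nonneg (hE0 x (Ico_subset_Icc_self hx)),
        abs_of_nonneg (hG0 x (Ico_subset_Icc_self hx))]
      exact hle x (Ico_subset_Icc_self hx)
  intro s hs
  exact le_antisymm (by simpa [hG s hs] using hle s hs) (hE0 s hs)

theorem le_of_integral_le_sub {w : ℝ → ℝ} {K b β t T : ℝ} (hK : 0 < K)
    (hw : ContinuousOn w (Icc t T)) (hβ : β ≤ w t)
    (hinc : ∀ s₁ s₂, t ≤ s₁ → s₁ ≤ s₂ → s₂ ≤ T → ∫ r in s₁..s₂, (b - K * w r) ≤ w s₂ - w s₁) :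
    ∀ s ∈ Icc t T, b / K + (β - b / K) * exp (-(K * (s - t))) ≤ w s := by
  set ψ : ℝ → ℝ := fun s => b / K + (β - b / K) * exp (-(K * (s - t)))
  have hψ : ∀ s, HasDerivAt ψ (b - K * ψ s) s := fun s => by
    have hlin : HasDerivAt (fun s => -(K * (s - t))) (-K) s := by
      simpa using ((hasDerivAt_id s).sub_const t).const_mul (-K)
    refine ((hlin.exp.const_mul (β - b / K)).const_add (b / K)).congr_deriv ?_
    simp only [ψ]
    field_simp
    ring
  have hψc : Continuous ψ := by fun_prop
  -- `ψ` solves `ψ' = b - K ψ` with `ψ t = β`, so `ψ - w` cannot increase while it is positive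
  suffices h : ∀ s ∈ Icc t T, ψ s - w s ≤ 0 from fun s hs => by linarith [h s hs]
  refine nonpos_of_le_of_forall_Ioc_pos (hψc.continuousOn.sub hw) (by simpa [ψ] using hβ) ?_
  intro s₁ s₂ h1 h12 h2 hpos
  have hwi : IntervalIntegrable w volume s₁ s₂ :=
    (hw.mono (Icc_subset_Icc h1 h2)).intervalIntegrable_of_Icc h12.le
  have hψi : IntervalIntegrable ψ volume s₁ s₂ := hψc.intervalIntegrable _ _
  have hψ'c : Continuous fun r => b - K * ψ r := by fun_prop
  have hψinc : ψ s₂ - ψ s₁ = ∫ r in s₁..s₂, (b - K * ψ r) :=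
    (intervalIntegral.integral_eq_sub_of_hasDerivAt (fun r _ => hψ r)
      (hψ'c.intervalIntegrable _ _)).symm
  have hgap : (∫ r in s₁..s₂, (b - K * ψ r)) - ∫ r in s₁..s₂, (b - K * w r)
      = -(K * ∫ r in s₁..s₂, (ψ r - w r)) := by
    rw [← intervalIntegral.integral_sub, ← intervalIntegral.integral_const_mul,
      ← intervalIntegral.integral_neg]
    · congr 1; ext r; ring
    · exact intervalIntegrable_const.sub (hψi.const_mul K)
    · exact intervalIntegrable_const.sub (hwi.const_mul K)
  have hgap_nonneg : 0 ≤ ∫ r in s₁..s₂, (ψ r - w r) := by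
    simpa using intervalIntegral.integral_mono_on_of_le_Ioo h12.le intervalIntegrable_const
      (hψi.sub hwi) fun r hr => (hpos r (Ioo_subset_Ioc_self hr)).le
  nlinarith [hinc s₁ s₂ h1 h12.le h2, mul_nonneg hK.le hgap_nonneg]

section Generators

variable {ι : Type*} [Fintype ι]

/-- The generator of a continuous-time Markov chain on `ι` acting on column vectors
(`p' = A p`), with all jump rates at most `C`. -/
def IsBoundedGenerator (C : ℝ) (A : Matrix ι ι ℝ) : Prop :=
  (∀ i j, i ≠ j → A i j ∈ Icc 0 C) ∧ ∀ j, ∑ i, A i j = 0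

namespace IsBoundedGenerator

variable {C : ℝ} {A : Matrix ι ι ℝ}

theorem diag_eq [DecidableEq ι] (hA : IsBoundedGenerator C A) (j : ι) :
    A j j = -∑ i ∈ univ.erase j, A i j := by
  linarith [add_sum_erase univ (fun i => A i j) (mem_univ j), hA.2 j]

theorem diag_nonpos (hA : IsBoundedGenerator C A) (j : ι) : A j j ≤ 0 := by
  classical
  rw [hA.diag_eq, neg_nonpos]
  exact sum_nonneg fun i hi => (hA.1 i j (ne_of_mem_erase hi)).1

theorem neg_card_mul_le_diag (hA : IsBoundedGenerator C A) (hC : 0 ≤ C) (j : ι) :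
    -(Fintype.card ι * C) ≤ A j j := by
  classical
  rw [hA.diag_eq, neg_le_neg_iff]
  calc ∑ i ∈ univ.erase j, A i j ≤ ∑ _i ∈ univ.erase j, C :=
        sum_le_sum fun i hi => (hA.1 i j (ne_of_mem_erase hi)).2
    _ ≤ ∑ _i : ι, C := sum_le_sum_of_subset_of_nonneg (erase_subset _ _) fun _ _ _ => hC
    _ = Fintype.card ι * C := by simp

theorem abs_le (hA : IsBoundedGenerator C A) (hC : 0 ≤ C) (i j : ι) :
    |A i j| ≤ Fintype.card ι * C := by
  have hcard : (1 : ℝ) ≤ Fintype.card ι := Nat.one_le_cast.2 (Fintype.card_pos_iff.2 ⟨i⟩)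
  rcases eq_or_ne i j with rfl | hij
  · rw [abs_of_nonpos (hA.diag_nonpos i)]
    linarith [hA.neg_card_mul_le_diag hC i]
  · rw [abs_of_nonneg (hA.1 i j hij).1]
    nlinarith [(hA.1 i j hij).2]

theorem sum_mulVec (hA : IsBoundedGenerator C A) (v : ι → ℝ) : ∑ i, (A *ᵥ v) i = 0 := by
  simp only [mulVec, dotProduct]
  rw [sum_comm]
  simp [← sum_mul, hA.2]

theorem diag_mul_le_mulVec (hA : IsBoundedGenerator C A) {v : ι → ℝ} (hv : 0 ≤ v) (i : ι) :
    A i i * v i ≤ (A *ᵥ v) i := by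
  classical
  rw [mulVec, dotProduct, ← add_sum_erase univ _ (mem_univ i), le_add_iff_nonneg_right]
  exact sum_nonneg fun j hj => mul_nonneg (hA.1 i j (ne_of_mem_erase hj).symm).1 (hv j)

theorem diag_mul_add_le_mulVec (hA : IsBoundedGenerator C A) {v : ι → ℝ} (hv : 0 ≤ v)
    {i j : ι} (hji : j ≠ i) : A i i * v i + A i j * v j ≤ (A *ᵥ v) i := by
  classical
  rw [mulVec, dotProduct, ← add_sum_erase univ _ (mem_univ i), add_le_add_iff_left]
  exact single_le_sum (f := fun j => A i j * v j)
    (fun k hk => mul_nonneg (hA.1 i k (ne_of_mem_erase hk).symm).1 (hv k))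
    (mem_erase.2 ⟨hji, mem_univ j⟩)

theorem neg_mul_sum_negPart_le_mulVec (hA : IsBoundedGenerator C A) (hC : 0 ≤ C)
    {v : ι → ℝ} {i : ι} (hvi : v i ≤ 0) : -(C * ∑ j, (v j)⁻) ≤ (A *ᵥ v) i := by
  classical
  have hterm : ∀ j, -(C * (v j)⁻) ≤ A i j * v j := by
    intro j
    rcases eq_or_ne i j with rfl | hij
    · nlinarith [hA.diag_nonpos i, negPart_nonneg (v i)]
    · obtain ⟨h0, hC'⟩ := hA.1 i j hij
      nlinarith [neg_le_negPart (v j), negPart_nonneg (v j)]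
  rw [mul_sum, ← sum_neg_distrib]
  exact sum_le_sum fun j _ => hterm j

end IsBoundedGenerator

def IsMildSolution (Q : ℝ → Matrix ι ι ℝ) (p₀ : ι → ℝ) (p : ℝ → ι → ℝ) : Prop :=
  ContinuousOn p (Ici 0) ∧ ∀ s, 0 ≤ s → p s = p₀ + ∫ r in (0 : ℝ)..s, Q r *ᵥ p r

namespace IsMildSolution

variable {Q : ℝ → Matrix ι ι ℝ} {p₀ : ι → ℝ} {p : ℝ → ι → ℝ} {C M : ℝ}

theorem apply_zero (hp : IsMildSolution Q p₀ p) : p 0 = p₀ := by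
  simpa using hp.2 0 le_rfl

theorem continuousOn_apply (hp : IsMildSolution Q p₀ p) (i : ι) :
    ContinuousOn (fun r => p r i) (Ici 0) :=
  (continuous_apply i).comp_continuousOn hp.1

theorem intervalIntegrable_mulVec_apply (hp : IsMildSolution Q p₀ p)
    (hQm : ∀ i j, Measurable fun t => Q t i j) (hQb : ∀ t i j, |Q t i j| ≤ M)
    {a b : ℝ} (ha : 0 ≤ a) (hb : 0 ≤ b) (i : ι) :
    IntervalIntegrable (fun r => (Q r *ᵥ p r) i) volume a b := by
  have hsub : uIcc a b ⊆ Ici 0 := fun r hr => (le_min ha hb).trans hr.1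
  refine IntegrableOn.intervalIntegrable ?_
  simp only [mulVec, dotProduct]
  refine integrable_finsetSum _ fun j _ => IntegrableOn.mul_continuousOn ?_
    ((hp.continuousOn_apply j).mono hsub) isCompact_uIcc
  exact Measure.integrableOn_of_bounded isCompact_uIcc.measure_lt_top.ne
    (hQm i j).aestronglyMeasurable (ae_of_all _ fun t => (hQb t i j : _))

theorem intervalIntegrable_mulVec (hp : IsMildSolution Q p₀ p)
    (hQm : ∀ i j, Measurable fun t => Q t i j) (hQb : ∀ t i j, |Q t i j| ≤ M)
    {a b : ℝ} (ha : 0 ≤ a) (hb : 0 ≤ b) :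
    IntervalIntegrable (fun r => Q r *ᵥ p r) volume a b :=
  ⟨integrable_pi_iff.2 fun i => (hp.intervalIntegrable_mulVec_apply hQm hQb ha hb i).1,
    integrable_pi_iff.2 fun i => (hp.intervalIntegrable_mulVec_apply hQm hQb ha hb i).2⟩

theorem sub_eq_integral (hp : IsMildSolution Q p₀ p)
    (hQm : ∀ i j, Measurable fun t => Q t i j) (hQb : ∀ t i j, |Q t i j| ≤ M)
    {t s : ℝ} (ht : 0 ≤ t) (hs : 0 ≤ s) (i : ι) :
    p s i - p t i = ∫ r in t..s, (Q r *ᵥ p r) i := by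
  have hcomm := (ContinuousLinearMap.proj (R := ℝ) (φ := fun _ : ι => ℝ) i
    ).intervalIntegral_comp_comm (hp.intervalIntegrable_mulVec hQm hQb ht hs)
  simp only [ContinuousLinearMap.proj_apply] at hcomm
  rw [hcomm, ← intervalIntegral.integral_interval_sub_left
    (hp.intervalIntegrable_mulVec hQm hQb le_rfl hs)
    (hp.intervalIntegrable_mulVec hQm hQb le_rfl ht), hp.2 s hs, hp.2 t ht]
  simp

theorem sum_apply (hp : IsMildSolution Q p₀ p)
    (hQm : ∀ i j, Measurable fun t => Q t i j) (hQ : ∀ t, IsBoundedGenerator C (Q t))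
    (hC : 0 ≤ C) {s : ℝ} (hs : 0 ≤ s) : ∑ i, p s i = ∑ i, p₀ i := by
  have hQb : ∀ t i j, |Q t i j| ≤ Fintype.card ι * C := fun t => (hQ t).abs_le hC
  rw [← sub_eq_zero, ← hp.apply_zero, ← sum_sub_distrib]
  simp_rw [hp.sub_eq_integral hQm hQb le_rfl hs]
  rw [← intervalIntegral.integral_finsetSum fun i _ =>
    hp.intervalIntegrable_mulVec_apply hQm hQb le_rfl hs i]
  simp [(hQ _).sum_mulVec]

theorem continuousOn_sum_negPart (hp : IsMildSolution Q p₀ p) :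
    ContinuousOn (fun r => ∑ j, (p r j)⁻) (Ici 0) :=
  continuousOn_finsetSum _ fun j _ => by
    simpa only [negPart_def, Function.comp_def] using
      (continuous_neg.max continuous_const).comp_continuousOn (hp.continuousOn_apply j)

theorem negPart_le (hp : IsMildSolution Q p₀ p)
    (hQm : ∀ i j, Measurable fun t => Q t i j) (hQ : ∀ t, IsBoundedGenerator C (Q t))
    (hC : 0 ≤ C) (hp₀ : 0 ≤ p₀) {s : ℝ} (hs : 0 ≤ s) (i : ι) :
    (p s i)⁻ ≤ C * ∫ r in (0 : ℝ)..s, ∑ j, (p r j)⁻ := by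
  set E : ℝ → ℝ := fun r => ∑ j, (p r j)⁻
  have hQb : ∀ t i j, |Q t i j| ≤ Fintype.card ι * C := fun t => (hQ t).abs_le hC
  have hEi : ∀ a b, 0 ≤ a → 0 ≤ b → IntervalIntegrable E volume a b := fun a b ha hb =>
    (hp.continuousOn_sum_negPart.mono fun r hr => (le_min ha hb).trans hr.1).intervalIntegrable
  have hEint : ∀ r, 0 ≤ r → 0 ≤ ∫ r' in (0 : ℝ)..r, E r' := fun r hr =>
    intervalIntegral.integral_nonneg hr fun _ _ => sum_nonneg fun j _ => negPart_nonneg _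
  -- the defect `D r = -p r i - C ∫₀ʳ E` cannot grow while positive, because `p i < 0` there
  have hD : ∀ r ∈ Icc 0 s, -p r i - C * ∫ r' in (0 : ℝ)..r, E r' ≤ 0 := by
    refine nonpos_of_le_of_forall_Ioc_pos ?_ (by simpa [hp.apply_zero] using hp₀ i) ?_
    · refine ((hp.continuousOn_apply i).mono Icc_subset_Ici_self).neg.sub
        (continuousOn_const.mul ?_)
      simpa [uIcc_of_le hs] using
        intervalIntegral.continuousOn_primitive_interval' (hEi 0 s le_rfl hs) left_mem_uIcc
    intro s₁ s₂ h1 h12 h2 hpos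
    have hF : ∀ r ∈ Ioo s₁ s₂, -(C * E r) ≤ (Q r *ᵥ p r) i := fun r hr =>
      (hQ r).neg_mul_sum_negPart_le_mulVec hC (by
        nlinarith [hpos r (Ioo_subset_Ioc_self hr), hEint r (h1.trans hr.1.le)])
    have hmono := intervalIntegral.integral_mono_on_of_le_Ioo (f := fun r => -(C * E r)) h12.le
      ((hEi s₁ s₂ h1 (h1.trans h12.le)).const_mul C).neg
      (hp.intervalIntegrable_mulVec_apply hQm hQb h1 (h1.trans h12.le) i) hF
    have hsplit := intervalIntegral.integral_interval_sub_left
      (hEi 0 s₂ le_rfl (h1.trans h12.le)) (hEi 0 s₁ le_rfl h1)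
    rw [intervalIntegral.integral_neg, intervalIntegral.integral_const_mul] at hmono
    have := hp.sub_eq_integral hQm hQb h1 (h1.trans h12.le) i
    nlinarith
  rw [negPart_def]
  exact sup_le (by linarith [hD s ⟨hs, le_rfl⟩]) (mul_nonneg hC (hEint s hs))

theorem nonneg (hp : IsMildSolution Q p₀ p)
    (hQm : ∀ i j, Measurable fun t => Q t i j) (hQ : ∀ t, IsBoundedGenerator C (Q t))
    (hC : 0 ≤ C) (hp₀ : 0 ≤ p₀) {s : ℝ} (hs : 0 ≤ s) : 0 ≤ p s := by
  have hE := eq_zero_of_le_mul_integral_s12 (K := Fintype.card ι * C)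
    (hp.continuousOn_sum_negPart.mono Icc_subset_Ici_self)
    (fun r _ => sum_nonneg fun j _ => negPart_nonneg _) (fun r hr => by
      calc ∑ j, (p r j)⁻ ≤ ∑ _j : ι, C * ∫ r' in (0 : ℝ)..r, ∑ j, (p r' j)⁻ :=
            sum_le_sum fun j _ => hp.negPart_le hQm hQ hC hp₀ hr.1 j
        _ = _ := by simp [mul_assoc]) s ⟨hs, le_rfl⟩
  intro i
  exact negPart_eq_zero.1 ((sum_eq_zero_iff_of_nonneg fun j _ => negPart_nonneg _).1 hE i
    (mem_univ i))

theorem le_of_sub_mul_le_mulVec_apply (hp : IsMildSolution Q p₀ p)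
    (hQm : ∀ i j, Measurable fun t => Q t i j) (hQb : ∀ t i j, |Q t i j| ≤ M)
    {i : ι} {K b β t T : ℝ} (hK : 0 < K) (ht : 0 ≤ t) (hβ : β ≤ p t i)
    (hF : ∀ r ∈ Icc t T, b - K * p r i ≤ (Q r *ᵥ p r) i) :
    ∀ s ∈ Icc t T, b / K + (β - b / K) * exp (-(K * (s - t))) ≤ p s i := by
  have hpi : ContinuousOn (fun r => p r i) (Icc t T) :=
    (hp.continuousOn_apply i).mono fun r hr => ht.trans hr.1
  refine le_of_integral_le_sub hK hpi hβ fun s₁ s₂ h1 h12 h2 => ?_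
  rw [hp.sub_eq_integral hQm hQb (ht.trans h1) (ht.trans (h1.trans h12))]
  exact intervalIntegral.integral_mono_on h12
    (intervalIntegrable_const.sub
      (((hpi.mono (Icc_subset_Icc h1 h2)).intervalIntegrable_of_Icc h12).const_mul K))
    (hp.intervalIntegrable_mulVec_apply hQm hQb (ht.trans h1) (ht.trans (h1.trans h12)) i)
    fun r hr => hF r ⟨h1.trans hr.1, hr.2.trans h2⟩

theorem mul_exp_le (hp : IsMildSolution Q p₀ p)
    (hQm : ∀ i j, Measurable fun t => Q t i j) (hQ : ∀ t, IsBoundedGenerator C (Q t))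
    (hC : 0 < C) (hp₀ : 0 ≤ p₀) {t s : ℝ} (ht : 0 ≤ t) (hts : t ≤ s) (i : ι) :
    p t i * exp (-(Fintype.card ι * C * (s - t))) ≤ p s i := by
  have hK : 0 < (Fintype.card ι : ℝ) * C := by
    have : Nonempty ι := ⟨i⟩
    positivity
  have := hp.le_of_sub_mul_le_mulVec_apply hQm (fun t => (hQ t).abs_le hC.le) (b := 0) hK ht
    le_rfl (fun r hr => by
      have hpr := hp.nonneg hQm hQ hC.le hp₀ (ht.trans hr.1)
      linarith [(hQ r).diag_mul_le_mulVec hpr i,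
        mul_le_mul_of_nonneg_right ((hQ r).neg_card_mul_le_diag hC.le i) (hpr i)])
    s ⟨hts, le_rfl⟩
  simpa using this

theorem mul_one_sub_exp_le (hp : IsMildSolution Q p₀ p)
    (hQm : ∀ i j, Measurable fun t => Q t i j) (hQ : ∀ t, IsBoundedGenerator C (Q t))
    (hC : 0 < C) (hp₀ : 0 ≤ p₀) {i j : ι} (hji : j ≠ i) {c a t T : ℝ} (ht : 0 ≤ t)
    (hc : 0 ≤ c) (hQij : ∀ r ∈ Icc t T, c ≤ Q r i j) (hpj : ∀ r ∈ Icc t T, a ≤ p r j) :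
    ∀ s ∈ Icc t T, c * a / (Fintype.card ι * C) * (1 - exp (-(Fintype.card ι * C * (s - t))))
      ≤ p s i := by
  have hK : 0 < (Fintype.card ι : ℝ) * C := by
    have : Nonempty ι := ⟨i⟩
    positivity
  intro s hs
  have := hp.le_of_sub_mul_le_mulVec_apply hQm (fun t => (hQ t).abs_le hC.le) (b := c * a)
    (β := 0) hK ht (hp.nonneg hQm hQ hC.le hp₀ ht i) (fun r hr => by
      have hpr := hp.nonneg hQm hQ hC.le hp₀ (ht.trans hr.1)
      linarith [(hQ r).diag_mul_add_le_mulVec hpr hji,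
        mul_le_mul_of_nonneg_right ((hQ r).neg_card_mul_le_diag hC.le i) (hpr i),
        mul_le_mul_of_nonneg_left (hpj r hr) hc, mul_le_mul_of_nonneg_right (hQij r hr) (hpr j)])
    s hs
  linarith

theorem exists_forall_exp_div_le (hp : IsMildSolution Q p₀ p)
    (hQm : ∀ i j, Measurable fun t => Q t i j) (hQ : ∀ t, IsBoundedGenerator C (Q t))
    (hC : 0 < C) (hsum : ∑ i, p₀ i = 1) (hp₀ : 0 ≤ p₀) (T : ℝ) :
    ∃ j₀, ∀ s ∈ Icc 0 T, exp (-(Fintype.card ι * C * T)) / Fintype.card ι ≤ p s j₀ := by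
  have hne : (univ : Finset ι).Nonempty :=
    nonempty_of_sum_ne_zero (f := p₀) (by rw [hsum]; exact one_ne_zero)
  have : Nonempty ι := univ_nonempty_iff.1 hne
  obtain ⟨j₀, -, hj₀⟩ := exists_le_of_sum_le (f := fun _ => 1 / (Fintype.card ι : ℝ)) (g := p₀)
    hne (by rw [hsum]; simp)
  refine ⟨j₀, fun s hs => ?_⟩
  have hdecay := hp.mul_exp_le hQm hQ hC hp₀ le_rfl hs.1 j₀
  rw [hp.apply_zero, sub_zero] at hdecay
  calc exp (-(Fintype.card ι * C * T)) / Fintype.card ι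
        = 1 / Fintype.card ι * exp (-(Fintype.card ι * C * T)) := by ring
    _ ≤ p₀ j₀ * exp (-(Fintype.card ι * C * s)) :=
      mul_le_mul hj₀ (exp_le_exp.2 (neg_le_neg (mul_le_mul_of_nonneg_left hs.2 (by positivity))))
        (exp_pos _).le (hp₀ j₀)
    _ ≤ p s j₀ := hdecay

end IsMildSolution

end Generators

theorem Fin.exists_adjacent_dist_eq {N d : ℕ} {i j₀ : Fin N} (h : Nat.dist i j₀ = d + 1) :
    ∃ j : Fin N, ((i : ℕ) + 1 = j ∨ (j : ℕ) + 1 = i) ∧ Nat.dist j j₀ = d := by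
  unfold Nat.dist at *
  rcases lt_or_ge (i : ℕ) j₀ with hlt | hge
  · exact ⟨⟨i + 1, by omega⟩, Or.inl rfl, by simp only; omega⟩
  · exact ⟨⟨i - 1, by omega⟩, Or.inr (by simp only; omega), by simp only; omega⟩

theorem mul_pow_dist_le_of_adjacent {N : ℕ} {u : ℝ → Fin N → ℝ} {j₀ : Fin N} {a₀ ρ τ T : ℝ}
    (ha₀ : 0 ≤ a₀) (hρ : 0 ≤ ρ) (hτ : 0 ≤ τ) (hbase : ∀ s ∈ Icc 0 T, a₀ ≤ u s j₀)
    (hstep : ∀ i j : Fin N, ((i : ℕ) + 1 = j ∨ (j : ℕ) + 1 = i) → ∀ a t, 0 ≤ a → 0 ≤ t →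
      (∀ r ∈ Icc t T, a ≤ u r j) → ∀ s ∈ Icc (t + τ) T, ρ * a ≤ u s i)
    (i : Fin N) : ∀ s ∈ Icc (Nat.dist i j₀ * τ) T, a₀ * ρ ^ Nat.dist i j₀ ≤ u s i := by
  generalize hd : Nat.dist i j₀ = d
  induction d generalizing i with
  | zero =>
    obtain rfl : i = j₀ := Fin.ext (Nat.eq_of_dist_eq_zero hd)
    simpa using hbase
  | succ d ih =>
    obtain ⟨j, hadj, hj⟩ := Fin.exists_adjacent_dist_eq hd
    intro s hs
    rw [pow_succ', mul_left_comm]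
    exact hstep i j hadj _ _ (by positivity) (by positivity) (ih j hj) s
      (by push_cast at hs; constructor <;> linarith [hs.1, hs.2])

theorem mul_pow_le_of_adjacent {N : ℕ} {u : ℝ → Fin N → ℝ} {j₀ : Fin N} {a₀ ρ τ T : ℝ}
    (ha₀ : 0 ≤ a₀) (hρ : 0 ≤ ρ) (hρ1 : ρ ≤ 1) (hτ : 0 ≤ τ) (hT : ((N - 1 : ℕ) : ℝ) * τ ≤ T)
    (hbase : ∀ s ∈ Icc 0 T, a₀ ≤ u s j₀)
    (hstep : ∀ i j : Fin N, ((i : ℕ) + 1 = j ∨ (j : ℕ) + 1 = i) → ∀ a t, 0 ≤ a → 0 ≤ t →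
      (∀ r ∈ Icc t T, a ≤ u r j) → ∀ s ∈ Icc (t + τ) T, ρ * a ≤ u s i)
    (i : Fin N) : a₀ * ρ ^ (N - 1) ≤ u T i := by
  have hd : Nat.dist i j₀ ≤ N - 1 := by unfold Nat.dist; omega
  calc a₀ * ρ ^ (N - 1) ≤ a₀ * ρ ^ Nat.dist i j₀ :=
        mul_le_mul_of_nonneg_left (pow_le_pow_of_le_one hρ hρ1 hd) ha₀
    _ ≤ u T i := mul_pow_dist_le_of_adjacent ha₀ hρ hτ hbase hstep i T
        ⟨(mul_le_mul_of_nonneg_right (by exact_mod_cast hd) hτ).trans hT, le_rfl⟩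

theorem IsTridiagGenFamily.isBoundedGenerator {N : ℕ} {c C : ℝ}
    {Q : ℝ → Matrix (Fin N) (Fin N) ℝ} (hQ : IsTridiagGenFamily N c C Q) (hc : 0 ≤ c)
    (hcC : c ≤ C) (t : ℝ) : IsBoundedGenerator C (Q t) := by
  obtain ⟨hzero, hadj, hcol⟩ := hQ.2 t
  refine ⟨fun i j hij => ?_, hcol⟩
  by_cases h : (i : ℕ) + 1 = j ∨ (j : ℕ) + 1 = i
  · exact ⟨hc.trans (hadj i j h).1, (hadj i j h).2⟩
  · rw [hzero i j (by have := Fin.val_ne_of_ne hij; omega)]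
    exact ⟨le_rfl, hc.trans hcC⟩

theorem IsTridiagGenFamily.mul_le_of_adjacent {N : ℕ} {c C : ℝ}
    {Q : ℝ → Matrix (Fin N) (Fin N) ℝ} {p₀ : Fin N → ℝ} {p : ℝ → Fin N → ℝ}
    (hQ : IsTridiagGenFamily N c C Q) (hc : 0 < c) (hcC : c ≤ C) (hp : IsMildSolution Q p₀ p)
    (hp₀ : 0 ≤ p₀) {i j : Fin N} (hadj : (i : ℕ) + 1 = j ∨ (j : ℕ) + 1 = i) {a t T : ℝ}
    (ha : 0 ≤ a) (ht : 0 ≤ t) (hpj : ∀ r ∈ Icc t T, a ≤ p r j) :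
    ∀ s ∈ Icc (t + 1 / N) T, c * (1 - exp (-C)) / (N * C) * a ≤ p s i := by
  intro s hs
  have hC : 0 < C := hc.trans_le hcC
  have hN : (0 : ℝ) < N := Nat.cast_pos.2 (by omega)
  have hji : j ≠ i := fun h => by subst h; omega
  have hgain := hp.mul_one_sub_exp_le hQ.1 (hQ.isBoundedGenerator hc.le hcC) hC hp₀ hji ht hc.le
    (fun r _ => ((hQ.2 r).2.1 i j hadj).1) hpj s ⟨by linarith [hs.1, one_div_pos.2 hN], hs.2⟩
  rw [Fintype.card_fin] at hgain
  have hexp : exp (-(N * C * (s - t))) ≤ exp (-C) := by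
    refine exp_le_exp.2 (neg_le_neg ?_)
    have := mul_le_mul_of_nonneg_left (show 1 / (N : ℝ) ≤ s - t by linarith [hs.1])
      (by positivity : (0 : ℝ) ≤ N * C)
    rwa [mul_one_div, mul_div_cancel_left₀ _ hN.ne'] at this
  calc c * (1 - exp (-C)) / (N * C) * a = c * a / (N * C) * (1 - exp (-C)) := by ring
    _ ≤ c * a / (N * C) * (1 - exp (-(N * C * (s - t)))) := by gcongr
    _ ≤ p s i := hgain

/-- **Uniform dissipativity.** Fix `0 < c ≤ C` and `N ≥ 2`. There is `δ > 0` such that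
for every measurable family `Q` of tridiagonal generators with off-diagonal entries in
`[c, C]`, every `p₀ ∈ Σ_N`, and every Carathéodory solution `p` of `p' = Q(t) p`,
`p 0 = p₀`, all components of `p 1` are at least `δ`, and `p 1 ∈ Σ_N`. -/
theorem tridiag_uniform_dissipative {N : ℕ} (hN : 2 ≤ N)
    (c C : ℝ) (hc : 0 < c) (hcC : c ≤ C) :
    ∃ δ > (0 : ℝ),
      ∀ Q : ℝ → Matrix (Fin N) (Fin N) ℝ, IsTridiagGenFamily N c C Q →
      ∀ p₀ ∈ probSimplex N,
      ∀ p : ℝ → (Fin N → ℝ), ContinuousOn p (Set.Ici (0 : ℝ)) →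
        (∀ s : ℝ, 0 ≤ s → p s = p₀ + ∫ r in (0 : ℝ)..s, (Q r).mulVec (p r)) →
        (∀ i, δ ≤ p 1 i) ∧ p 1 ∈ probSimplex N := by
  have hC : 0 < C := hc.trans_le hcC
  have hN₀ : (0 : ℝ) < N := Nat.cast_pos.2 (by omega)
  have hρ : 0 < c * (1 - exp (-C)) / (N * C) := by
    have := exp_lt_one_iff.2 (neg_lt_zero.2 hC)
    exact div_pos (mul_pos hc (by linarith)) (by positivity)
  have hρ1 : c * (1 - exp (-C)) / (N * C) ≤ 1 := by
    rw [div_le_one (by positivity)]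
    nlinarith [exp_pos (-C), (Nat.one_le_cast (α := ℝ)).2 (by omega : 1 ≤ N)]
  refine ⟨exp (-(N * C)) / N * (c * (1 - exp (-C)) / (N * C)) ^ (N - 1), by positivity,
    fun Q hQ p₀ hp₀ p hpc hpeq => ?_⟩
  have hp : IsMildSolution Q p₀ p := ⟨hpc, hpeq⟩
  have hgen := hQ.isBoundedGenerator hc.le hcC
  obtain ⟨j₀, hj₀⟩ := hp.exists_forall_exp_div_le hQ.1 hgen hC hp₀.1 hp₀.2 1
  rw [Fintype.card_fin, mul_one] at hj₀
  refine ⟨fun i => mul_pow_le_of_adjacent (by positivity) hρ.le hρ1 (by positivity) ?_ hj₀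
      (fun i j hadj a t ha ht => hQ.mul_le_of_adjacent hc hcC hp hp₀.2 hadj ha ht) i,
    (hp.sum_apply hQ.1 hgen hC.le zero_le_one).trans hp₀.1,
    fun i => hp.nonneg hQ.1 hgen hC.le hp₀.2 zero_le_one i⟩
  rw [mul_one_div, div_le_one hN₀]
  exact_mod_cast Nat.sub_le N 1
end
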